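/- arXiv:1904.06068 — 6 statements merged into one kernel-verified Lean document; each statement's English description precedes it below -/
import Mathlib

section
/- Let x, y be vectors in ℝ^n. Then y is majorised by x in the sense of Hardy–Littlewood–Pólya (the sum of the k largest entries of y is at most that of x for every k, with equality for k = n) if and only if y lies in the convex hull of the set of all coordinate permutations of x. -/
/-!
If `y` lies in the convex hull of the permutations of `x`, then `y ≺ x`, because every
permutation of `x` is majorised by `x` and `z ↦ topSum z k` is convex. Conversely, if `y ≺ x`
but `y` lies outside that compact convex hull, a linear functional `z ↦ ∑ i, z i * c i`
separates them. Listing the coordinates so that `c` decreases, summation by parts against the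
prefix-sum inequalities `∑_{i ≤ j} y i ≤ topSum y (j + 1) ≤ topSum x (j + 1)` shows that the
functional is at least as large at the decreasing rearrangement of `x`, laid out along the order
of `c`, as at `y`: a contradiction.
-/

open Finset

/-- Sum of the `k` largest entries of `x`: the supremum of sums over subsets of cardinality `k`. -/
noncomputable def topSum {n : ℕ} (x : Fin n → ℝ) (k : ℕ) : ℝ :=
  sSup {S : ℝ | ∃ A : Finset (Fin n), A.card = k ∧ S = ∑ i ∈ A, x i}

/-- Hardy–Littlewood–Pólya majorisation of vectors. -/
def Majorised {n : ℕ} (y x : Fin n → ℝ) : Prop :=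
  (∀ k ≤ n, topSum y k ≤ topSum x k) ∧ topSum y n = topSum x n

/-- The set of coordinate permutations of `x`. -/
def permSet {n : ℕ} (x : Fin n → ℝ) : Set (Fin n → ℝ) :=
  {z | ∃ σ : Equiv.Perm (Fin n), z = x ∘ σ}

section SumsOverFinsets

variable {ι M : Type*} [AddCommMonoid M] [LinearOrder M]

theorem Finset.sum_le_sum_of_card_eq_of_forall_le [IsOrderedAddMonoid M] {s t : Finset ι}
    {f : ι → M} (hst : #s = #t) (h : ∀ i ∈ s, ∀ j ∈ t, f i ≤ f j) :
    ∑ i ∈ s, f i ≤ ∑ j ∈ t, f j := by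
  rcases t.eq_empty_or_nonempty with rfl | ht
  · simp [card_eq_zero.1 hst]
  calc ∑ i ∈ s, f i ≤ #s • t.inf' ht f := sum_le_card_nsmul _ _ _ fun i hi ↦ le_inf' ht f (h i hi)
    _ = #t • t.inf' ht f := by rw [hst]
    _ ≤ ∑ j ∈ t, f j := card_nsmul_le_sum _ _ _ fun j hj ↦ inf'_le f hj

theorem Antitone.sum_le_sum_Iic [IsOrderedCancelAddMonoid M] [LinearOrder ι]
    [LocallyFiniteOrderBot ι] {w : ι → M} (hw : Antitone w) {s : Finset ι} {j : ι}
    (hs : #s = #(Iic j)) : ∑ i ∈ s, w i ≤ ∑ i ∈ Iic j, w i := by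
  classical
  rw [← sum_sdiff_le_sum_sdiff]
  refine sum_le_sum_of_card_eq_of_forall_le (card_sdiff_comm hs) fun i hi k hk ↦ hw ?_
  simp only [mem_sdiff, mem_Iic] at hi hk
  exact hk.1.trans (not_le.1 hi.2).le

end SumsOverFinsets

section SummationByParts

variable {ι : Type*} [LinearOrder ι] {c : ι → ℝ}

theorem Finset.mul_sum_le_sum_mul_of_antitone (hc : Antitone c) {d : ι → ℝ} (s : Finset ι)
    (hd : ∀ j ∈ s, 0 ≤ ∑ i ∈ s with i ≤ j, d i) {m : ℝ} (hm : ∀ i ∈ s, m ≤ c i) :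
    m * ∑ i ∈ s, d i ≤ ∑ i ∈ s, c i * d i := by
  induction s using Finset.induction_on_max generalizing m with
  | empty => simp
  | insert a s ha ih =>
    have ha' : a ∉ s := fun h ↦ lt_irrefl a (ha a h)
    have hprefix : ∀ j ∈ s, {i ∈ insert a s | i ≤ j} = {i ∈ s | i ≤ j} := fun j hj ↦ by
      rw [filter_insert, if_neg (not_le.2 (ha j hj))]
    have hs : c a * ∑ i ∈ s, d i ≤ ∑ i ∈ s, c i * d i :=
      ih (fun j hj ↦ hprefix j hj ▸ hd j (mem_insert_of_mem hj)) fun i hi ↦ hc (ha i hi).le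
    have hall : {i ∈ insert a s | i ≤ a} = insert a s :=
      filter_true_of_mem fun i hi ↦ (mem_insert.1 hi).elim le_of_eq fun h ↦ (ha i h).le
    have htot : 0 ≤ ∑ i ∈ insert a s, d i := hall ▸ hd a (mem_insert_self a s)
    have hma : m ≤ c a := hm a (mem_insert_self a s)
    simp only [sum_insert ha'] at htot ⊢
    nlinarith

theorem Antitone.sum_mul_le_sum_mul_of_sum_Iic_le [Fintype ι] [LocallyFiniteOrderBot ι]
    (hc : Antitone c) {a b : ι → ℝ} (hab : ∀ j, ∑ i ∈ Iic j, a i ≤ ∑ i ∈ Iic j, b i)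
    (hsum : ∑ i, a i = ∑ i, b i) : ∑ i, c i * a i ≤ ∑ i, c i * b i := by
  obtain ⟨m, hm⟩ := (Set.finite_range c).bddBelow
  have := univ.mul_sum_le_sum_mul_of_antitone hc (d := b - a)
    (fun j _ ↦ by simpa [filter_ge_eq_Iic, sum_sub_distrib] using hab j) fun i _ ↦ hm ⟨i, rfl⟩
  simpa [mul_sub, sum_sub_distrib, hsum] using this

end SummationByParts

section TopSum

variable {n : ℕ}

theorem finite_sums_of_card_eq (x : Fin n → ℝ) (k : ℕ) :
    {S : ℝ | ∃ A : Finset (Fin n), #A = k ∧ S = ∑ i ∈ A, x i}.Finite :=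
  (Set.finite_range fun A : Finset (Fin n) ↦ ∑ i ∈ A, x i).subset <| by
    rintro S ⟨A, -, rfl⟩
    exact ⟨A, rfl⟩

theorem sum_le_topSum (x : Fin n → ℝ) {A : Finset (Fin n)} :
    ∑ i ∈ A, x i ≤ topSum x #A :=
  le_csSup (finite_sums_of_card_eq x _).bddAbove ⟨A, rfl, rfl⟩

theorem topSum_le {x : Fin n → ℝ} {k : ℕ} (hk : k ≤ n) {b : ℝ}
    (h : ∀ A : Finset (Fin n), #A = k → ∑ i ∈ A, x i ≤ b) : topSum x k ≤ b := by
  obtain ⟨A, -, hA⟩ :=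
    exists_subset_card_eq (s := (univ : Finset (Fin n))) (n := k) (by simpa using hk)
  exact csSup_le ⟨_, A, hA, rfl⟩ fun S ⟨A, hA, hS⟩ ↦ hS ▸ h A hA

theorem topSum_eq_sum_univ (x : Fin n → ℝ) : topSum x n = ∑ i, x i :=
  le_antisymm (topSum_le le_rfl fun A hA ↦ by rw [eq_univ_of_card A (by simpa using hA)])
    (by simpa using sum_le_topSum x (A := univ))

theorem topSum_comp_perm (x : Fin n → ℝ) (σ : Equiv.Perm (Fin n)) (k : ℕ) :
    topSum (x ∘ σ) k = topSum x k := by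
  unfold topSum
  congr 1
  ext S
  constructor
  · rintro ⟨A, rfl, rfl⟩
    exact ⟨A.map σ.toEmbedding, card_map _, by simp [sum_map]⟩
  · rintro ⟨A, rfl, rfl⟩
    exact ⟨A.map σ.symm.toEmbedding, card_map _, by simp [sum_map]⟩

theorem topSum_smul_add_smul_le {y z : Fin n → ℝ} {k : ℕ} (hk : k ≤ n) {a b : ℝ} (ha : 0 ≤ a)
    (hb : 0 ≤ b) : topSum (a • y + b • z) k ≤ a * topSum y k + b * topSum z k :=
  topSum_le hk fun A hA ↦ by
    have hy := sum_le_topSum y (A := A)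
    have hz := sum_le_topSum z (A := A)
    rw [hA] at hy hz
    simpa [sum_add_distrib, ← mul_sum] using
      add_le_add (mul_le_mul_of_nonneg_left hy ha) (mul_le_mul_of_nonneg_left hz hb)

theorem topSum_succ_eq_sum_Iic {x : Fin n → ℝ} {τ : Equiv.Perm (Fin n)} (hτ : Antitone (x ∘ τ))
    (j : Fin n) : topSum x (j + 1) = ∑ i ∈ Iic j, x (τ i) := by
  refine le_antisymm (topSum_le (by omega) fun A hA ↦ ?_) ?_
  · rw [← Fin.card_Iic, ← card_map τ.symm.toEmbedding] at hA
    simpa [sum_map] using hτ.sum_le_sum_Iic hA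
  · simpa [sum_map] using sum_le_topSum x (A := (Iic j).map τ.toEmbedding)

end TopSum

section Majorisation

variable {n : ℕ}

theorem exists_antitone_comp_perm (x : Fin n → ℝ) : ∃ τ : Equiv.Perm (Fin n), Antitone (x ∘ τ) :=
  ⟨Tuple.sort (-x), fun _ _ h ↦ neg_le_neg_iff.1 (Tuple.monotone_sort (-x) h)⟩

theorem majorised_comp_perm (x : Fin n → ℝ) (σ : Equiv.Perm (Fin n)) : Majorised (x ∘ σ) x :=
  ⟨fun k _ ↦ (topSum_comp_perm x σ k).le, topSum_comp_perm x σ n⟩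

theorem convex_setOf_majorised (x : Fin n → ℝ) : Convex ℝ {y | Majorised y x} := by
  intro y hy z hz a b ha hb hab
  refine ⟨fun k hk ↦ ?_, ?_⟩
  · calc topSum (a • y + b • z) k ≤ a * topSum y k + b * topSum z k :=
          topSum_smul_add_smul_le hk ha hb
      _ ≤ a * topSum x k + b * topSum x k := by
          gcongr
          exacts [hy.1 k hk, hz.1 k hk]
      _ = topSum x k := by rw [← add_mul, hab, one_mul]
  · have hy₂ := hy.2
    have hz₂ := hz.2
    simp only [topSum_eq_sum_univ] at hy₂ hz₂ ⊢
    simp [sum_add_distrib, ← mul_sum, hy₂, hz₂, ← add_mul, hab]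

theorem sum_Iic_le_topSum_of_majorised {x y : Fin n → ℝ} (h : Majorised y x)
    (τ : Equiv.Perm (Fin n)) (j : Fin n) : ∑ i ∈ Iic j, y (τ i) ≤ topSum x (j + 1) := by
  have := sum_le_topSum y (A := (Iic j).map τ.toEmbedding)
  rw [card_map, Fin.card_Iic, sum_map] at this
  exact this.trans (h.1 _ (by omega))

theorem exists_perm_sum_mul_le_of_majorised {x y : Fin n → ℝ} (h : Majorised y x)
    (c : Fin n → ℝ) : ∃ σ : Equiv.Perm (Fin n), ∑ i, y i * c i ≤ ∑ i, x (σ i) * c i := by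
  obtain ⟨τ, hτ⟩ := exists_antitone_comp_perm c
  obtain ⟨π, hπ⟩ := exists_antitone_comp_perm x
  refine ⟨τ.symm.trans π, ?_⟩
  have hsum : ∑ i, y (τ i) = ∑ i, x (π i) := by
    rw [Equiv.sum_comp τ y, Equiv.sum_comp π x, ← topSum_eq_sum_univ, ← topSum_eq_sum_univ, h.2]
  have key := hτ.sum_mul_le_sum_mul_of_sum_Iic_le (fun j ↦ by
    rw [← topSum_succ_eq_sum_Iic hπ]; exact sum_Iic_le_topSum_of_majorised h τ j) hsum
  rw [← Equiv.sum_comp τ, ← Equiv.sum_comp τ (fun i ↦ x _ * c i)]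
  simpa [mul_comm] using key

theorem exists_perm_apply_le_of_majorised {x y : Fin n → ℝ} (h : Majorised y x)
    (f : (Fin n → ℝ) →ₗ[ℝ] ℝ) : ∃ σ : Equiv.Perm (Fin n), f y ≤ f (x ∘ σ) := by
  obtain ⟨σ, hσ⟩ := exists_perm_sum_mul_le_of_majorised h fun i ↦ f fun j ↦ if i = j then 1 else 0
  refine ⟨σ, ?_⟩
  rw [f.pi_apply_eq_sum_univ y, f.pi_apply_eq_sum_univ (x ∘ σ)]
  simpa only [smul_eq_mul, Function.comp_apply] using hσ

theorem permSet_finite (x : Fin n → ℝ) : (permSet x).Finite :=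
  (Set.finite_range fun σ : Equiv.Perm (Fin n) ↦ x ∘ σ).subset fun _ ⟨σ, h⟩ ↦ ⟨σ, h.symm⟩

end Majorisation

theorem majorised_iff_mem_convexHull_permutations {n : ℕ} (x y : Fin n → ℝ) :
    Majorised y x ↔ y ∈ convexHull ℝ (permSet x) := by
  constructor
  · intro hmaj
    by_contra hy
    obtain ⟨f, u, hfu, huy⟩ := geometric_hahn_banach_closed_point (convex_convexHull ℝ _)
      ((permSet_finite x).isCompact_convexHull (𝕜 := ℝ)).isClosed hy
    obtain ⟨σ, hσ⟩ := exists_perm_apply_le_of_majorised hmaj (f : (Fin n → ℝ) →ₗ[ℝ] ℝ)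
    have hlt := hfu _ (subset_convexHull ℝ _ ⟨σ, rfl⟩)
    simp only [ContinuousLinearMap.coe_coe] at hσ
    linarith
  · refine fun hy ↦ convexHull_min ?_ (convex_setOf_majorised x) hy
    rintro _ ⟨σ, rfl⟩
    exact majorised_comp_perm x σ
end

section
/- Let x ∈ ℝ^n and let Ω(x) be the convex hull of all coordinate permutations of x. Then the extreme points of Ω(x) are exactly the permutations of x. -/
private lemma pt_ineq {t s a b : ℝ} (ht : 0 ≤ t) (hs : 0 ≤ s) (hts : t + s = 1) :
    (t * a + s * b) ^ 2 ≤ t * a ^ 2 + s * b ^ 2 := by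
  nlinarith [sq_nonneg (a - b), mul_nonneg ht hs]

private lemma sum_sq_le {n : ℕ} (x : Fin n → ℝ) {y : Fin n → ℝ}
    (hy : y ∈ convexHull ℝ (permSet x)) : ∑ i, (y i) ^ 2 ≤ ∑ i, (x i) ^ 2 := by
  have hconv : Convex ℝ {z : Fin n → ℝ | ∑ i, (z i) ^ 2 ≤ ∑ i, (x i) ^ 2} := by
    intro a ha b hb t s ht hs hts
    simp only [Set.mem_setOf_eq] at ha hb ⊢
    calc ∑ i, ((t • a + s • b) i) ^ 2 ≤ ∑ i, (t * (a i) ^ 2 + s * (b i) ^ 2) := by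
          refine Finset.sum_le_sum fun i _ => ?_
          simpa using pt_ineq (a := a i) (b := b i) ht hs hts
      _ = t * ∑ i, (a i) ^ 2 + s * ∑ i, (b i) ^ 2 := by
          rw [Finset.sum_add_distrib, Finset.mul_sum, Finset.mul_sum]
      _ ≤ ∑ i, (x i) ^ 2 := by
          have h1 := mul_le_mul_of_nonneg_left ha ht
          have h2 := mul_le_mul_of_nonneg_left hb hs
          have h3 : t * ∑ i, (x i) ^ 2 + s * ∑ i, (x i) ^ 2 = ∑ i, (x i) ^ 2 := by
            linear_combination (∑ i, (x i) ^ 2) * hts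
          linarith
  have hsub : permSet x ⊆ {z : Fin n → ℝ | ∑ i, (z i) ^ 2 ≤ ∑ i, (x i) ^ 2} := by
    rintro z ⟨σ, rfl⟩
    exact le_of_eq (Equiv.sum_comp σ (fun i => (x i) ^ 2))
  exact convexHull_min hsub hconv hy

theorem extremePoints_convexHull_permutations {n : ℕ} (x : Fin n → ℝ) :
    Set.extremePoints ℝ (convexHull ℝ (permSet x)) = permSet x := by
  apply Set.Subset.antisymm (extremePoints_convexHull_subset)
  rintro z hz
  obtain ⟨σ, rfl⟩ := hz
  rw [mem_extremePoints]
  refine ⟨subset_convexHull ℝ _ ⟨σ, rfl⟩, ?_⟩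
  intro a ha b hb hab
  obtain ⟨t, s, ht, hs, hts, hz⟩ := hab
  have hc : ∑ i, ((x ∘ σ) i) ^ 2 = ∑ i, (x i) ^ 2 := Equiv.sum_comp σ (fun i => (x i) ^ 2)
  have hfa := sum_sq_le x ha
  have hfb := sum_sq_le x hb
  have hpt : ∀ i ∈ Finset.univ, (t • a + s • b) i ^ 2 ≤ t * (a i) ^ 2 + s * (b i) ^ 2 := by
    intro i _
    simpa using pt_ineq (a := a i) (b := b i) ht.le hs.le hts
  have hsum : ∑ i, (t • a + s • b) i ^ 2 ≤ ∑ i, (t * (a i) ^ 2 + s * (b i) ^ 2) :=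
    Finset.sum_le_sum hpt
  have htotal : ∑ i, (t * (a i) ^ 2 + s * (b i) ^ 2) ≤ ∑ i, (x i) ^ 2 := by
    rw [Finset.sum_add_distrib, ← Finset.mul_sum, ← Finset.mul_sum]
    have h1 := mul_le_mul_of_nonneg_left hfa ht.le
    have h2 := mul_le_mul_of_nonneg_left hfb hs.le
    have h3 : t * ∑ i, (x i) ^ 2 + s * ∑ i, (x i) ^ 2 = ∑ i, (x i) ^ 2 := by
      linear_combination (∑ i, (x i) ^ 2) * hts
    linarith
  have heq : ∑ i, (t • a + s • b) i ^ 2 = ∑ i, (x i) ^ 2 := by rw [hz]; exact hc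
  have heq' : ∀ i ∈ Finset.univ, (t • a + s • b) i ^ 2 = t * (a i) ^ 2 + s * (b i) ^ 2 := by
    rw [← Finset.sum_eq_sum_iff_of_le hpt]
    linarith
  have hab' : a = b := by
    funext i
    have h := heq' i (Finset.mem_univ i)
    simp only [Pi.add_apply, Pi.smul_apply, smul_eq_mul] at h
    have h0 : t * s * (a i - b i) ^ 2 = 0 := by
      linear_combination (t * (a i) ^ 2 + s * (b i) ^ 2) * hts - h
    have hts' : t * s ≠ 0 := ne_of_gt (mul_pos ht hs)
    have : (a i - b i) ^ 2 = 0 := by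
      rcases mul_eq_zero.mp h0 with h' | h'
      · exact absurd h' hts'
      · exact h'
    have := pow_eq_zero_iff (n := 2) (by norm_num) |>.mp this
    linarith [sub_eq_zero.mp this]
  subst hab'
  have hfix : a = x ∘ σ := by
    rw [← hz]; funext i
    simp only [Pi.add_apply, Pi.smul_apply, smul_eq_mul]
    linear_combination (-(a i)) * hts
  exact ⟨hfix, hfix⟩
end

section
/- Let f : (0,1) → ℝ be integrable and 0 < s < 1. Then ∫₀ˢ λ(t; f) dt = sup{ ∫ f·a dm : a measurable, 0 ≤ a ≤ 1, ∫ a dm = s }. -/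
open MeasureTheory Set

/-- The decreasing rearrangement (spectral scale) of `f` on `(0,1)`. -/
noncomputable def rr (f : ℝ → ℝ) (t : ℝ) : ℝ :=
  sInf {s : ℝ | volume {u ∈ Ioo (0:ℝ) 1 | s < f u} ≤ ENNReal.ofReal t}

/-- Hardy–Littlewood–Pólya majorisation `g ≺ f` on `(0,1)`. -/
def Maj (g f : ℝ → ℝ) : Prop :=
  (∀ s ∈ Ico (0:ℝ) 1, (∫ t in Ioo (0:ℝ) s, rr g t) ≤ ∫ t in Ioo (0:ℝ) s, rr f t) ∧
    (∫ t in Ioo (0:ℝ) 1, rr g t) = ∫ t in Ioo (0:ℝ) 1, rr f t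

/-- The orbit `Ω(y)` of all integrable functions on `(0,1)` majorised by `y`. -/
def Omega (y : ℝ → ℝ) : Set (ℝ → ℝ) :=
  {x | IntegrableOn x (Ioo (0:ℝ) 1) ∧ Maj x y}

/-- `x` is an extreme point of the convex set `Ω` (functions identified a.e. on `(0,1)`). -/
def ExtremePt (Ω : Set (ℝ → ℝ)) (x : ℝ → ℝ) : Prop :=
  x ∈ Ω ∧ ∀ x₁ ∈ Ω, ∀ x₂ ∈ Ω,
    (∀ᵐ u ∂(volume.restrict (Ioo (0:ℝ) 1)), x u = (x₁ u + x₂ u) / 2) →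
    (∀ᵐ u ∂(volume.restrict (Ioo (0:ℝ) 1)), x₁ u = x₂ u)

/-! Bathtub principle: if `0 ≤ a ≤ 1` and `∫ a = s`, then
`∫ g a = ∫ (g - c) a + c s ≤ ∫ (g - c)⁺ + c s`, with equality for `a = 1` on `{g > c}` and `a` a
suitable constant on `{g = c}`; such an `a` exists as soon as `μ {g > c} ≤ s ≤ μ {g ≥ c}`.
The rearrangement `λ(·; f)` is the decreasing quantile function of the law `ν` of `f`, so it
pushes Lebesgue measure on `(0,1)` forward to `ν`, and `c = λ(s; f)` satisfies these bounds.
Since `λ ≥ c` on `(0,s)` and `λ ≤ c` on `(s,1)`, this gives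
`∫₀ˢ λ = ∫ (λ - c)⁺ + c s = ∫ (f - c)⁺ + c s`. -/

open Filter ProbabilityTheory

section Bathtub

variable {α : Type*} [MeasurableSpace α] {μ : Measure α} {g a : α → ℝ}

lemma MeasureTheory.Integrable.mul_of_mem_Icc (hg : Integrable g μ) (ha : Measurable a)
    (ha01 : ∀ x, a x ∈ Icc 0 1) : Integrable (fun x => g x * a x) μ :=
  hg.mul_bdd ha.aestronglyMeasurable <| ae_of_all _ fun x => by
    rw [Real.norm_eq_abs, abs_le]; exact ⟨by linarith [(ha01 x).1], (ha01 x).2⟩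

variable [IsFiniteMeasure μ]

lemma integral_mul_eq_integral_sub_mul_add (hg : Integrable g μ) (ha : Measurable a)
    (ha01 : ∀ x, a x ∈ Icc 0 1) (c : ℝ) :
    ∫ x, g x * a x ∂μ = ∫ x, (g x - c) * a x ∂μ + c * ∫ x, a x ∂μ := by
  have hgc : Integrable (fun x => g x - c) μ := hg.sub (integrable_const c)
  rw [← integral_const_mul, ← integral_add (hgc.mul_of_mem_Icc ha ha01)
    ((integrable_const c).mul_of_mem_Icc ha ha01)]
  congr with x
  ring

lemma exists_sub_mul_eq_max (hg : Measurable g) {c s : ℝ}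
    (hlt : μ.real (g ⁻¹' Ioi c) ≤ s) (hle : s ≤ μ.real (g ⁻¹' Ici c)) :
    ∃ a : α → ℝ, Measurable a ∧ (∀ x, a x ∈ Icc 0 1) ∧ ∫ x, a x ∂μ = s ∧
      ∀ x, (g x - c) * a x = max (g x - c) 0 := by
  set A := g ⁻¹' Ioi c
  set B := g ⁻¹' {c}
  have hA : MeasurableSet A := hg measurableSet_Ioi
  have hB : MeasurableSet B := hg (measurableSet_singleton c)
  have hAB : μ.real (g ⁻¹' Ici c) = μ.real A + μ.real B := by
    have hdisj : Disjoint A B := (disjoint_singleton_right.2 (lt_irrefl c)).preimage g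
    rw [← measureReal_union (μ := μ) hdisj hB]
    congr 1
    ext x
    simp [A, B, le_iff_lt_or_eq, eq_comm]
  set θ := (s - μ.real A) / μ.real B
  have hθB : μ.real B * θ = s - μ.real A := by
    rcases eq_or_ne (μ.real B) 0 with h | h
    · simp only [h, zero_mul]; linarith
    · exact mul_div_cancel₀ _ h
  have hθ : θ ∈ Icc 0 1 :=
    ⟨div_nonneg (by linarith) measureReal_nonneg,
      div_le_one_of_le₀ (by linarith) measureReal_nonneg⟩
  refine ⟨fun x => A.indicator (fun _ => 1) x + B.indicator (fun _ => θ) x,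
    (measurable_const.indicator hA).add (measurable_const.indicator hB), fun x => ?_, ?_,
    fun x => ?_⟩
  · rcases lt_trichotomy (g x) c with h | h | h
    · simp [A, B, h.ne, h.not_gt]
    · simp [A, B, h, hθ]
    · simp [A, B, h, h.ne']
  · rw [integral_add ((integrable_const 1).indicator hA) ((integrable_const θ).indicator hB),
      integral_indicator_const _ hA, integral_indicator_const _ hB, smul_eq_mul, smul_eq_mul, hθB]
    ring
  · rcases lt_trichotomy (g x) c with h | h | h
    · simp [A, B, h.ne, h.not_gt, h.le]
    · simp [A, B, h]
    · simp [A, B, h, h.ne', h.le]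

theorem isGreatest_integral_mul (hg : Integrable g μ) {c s : ℝ}
    (hlt : (μ.map g).real (Ioi c) ≤ s) (hle : s ≤ (μ.map g).real (Ici c)) :
    IsGreatest {I | ∃ a : α → ℝ, Measurable a ∧ (∀ x, a x ∈ Icc 0 1) ∧
      ∫ x, a x ∂μ = s ∧ I = ∫ x, g x * a x ∂μ}
      (∫ x, max (g x - c) 0 ∂μ + c * s) := by
  constructor
  · have hgg' := hg.1.ae_eq_mk
    have hg' : Measurable (hg.1.mk g) := hg.1.stronglyMeasurable_mk.measurable
    rw [Measure.map_congr hgg', map_measureReal_apply hg' measurableSet_Ioi] at hlt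
    rw [Measure.map_congr hgg', map_measureReal_apply hg' measurableSet_Ici] at hle
    obtain ⟨a, ha, ha01, has, hmax⟩ := exists_sub_mul_eq_max hg' hlt hle
    refine ⟨a, ha, ha01, has, ?_⟩
    rw [integral_mul_eq_integral_sub_mul_add hg ha ha01 c, has]
    congr 1
    refine integral_congr_ae ?_
    filter_upwards [hgg'] with x hx
    rw [hx, hmax]
  · rintro I ⟨a, ha, ha01, has, rfl⟩
    rw [integral_mul_eq_integral_sub_mul_add hg ha ha01 c, has]
    gcongr ?_ + _
    have hgc : Integrable (fun x => g x - c) μ := hg.sub (integrable_const c)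
    refine integral_mono (hgc.mul_of_mem_Icc ha ha01) hgc.pos_part fun x => ?_
    rcases le_total (g x - c) 0 with h | h
    · exact (mul_nonpos_of_nonpos_of_nonneg h (ha01 x).1).trans (le_max_right _ _)
    · exact (mul_le_of_le_one_right h (ha01 x).2).trans (le_max_left _ _)

end Bathtub

lemma ProbabilityTheory.measureReal_Ioi_eq_one_sub_cdf (ν : Measure ℝ) [IsProbabilityMeasure ν]
    (y : ℝ) : ν.real (Ioi y) = 1 - cdf ν y := by
  rw [← compl_Iic, probReal_compl_eq_one_sub measurableSet_Iic, cdf_eq_real]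

noncomputable def decreasingRearrangement (ν : Measure ℝ) (t : ℝ) : ℝ :=
  sInf {y | ν (Ioi y) ≤ ENNReal.ofReal t}

instance : IsProbabilityMeasure (volume.restrict (Ioo (0:ℝ) 1)) :=
  ⟨by simp⟩

namespace decreasingRearrangement

variable (ν : Measure ℝ) [IsProbabilityMeasure ν]

lemma eq_sInf_cdf {t : ℝ} (ht : 0 ≤ t) :
    decreasingRearrangement ν t = sInf {y | 1 - t ≤ cdf ν y} := by
  unfold decreasingRearrangement
  congr 1
  ext y
  rw [mem_ofPred_eq, ← ofReal_measureReal, measureReal_Ioi_eq_one_sub_cdf ν,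
    ENNReal.ofReal_le_ofReal_iff ht, mem_ofPred_eq, sub_le_comm]

lemma lt_iff {t : ℝ} (ht : t ∈ Ioo 0 1) (y : ℝ) :
    y < decreasingRearrangement ν t ↔ cdf ν y < 1 - t := by
  have hne : {y | 1 - t ≤ cdf ν y}.Nonempty :=
    ((tendsto_cdf_atTop ν).eventually
      (eventually_ge_nhds (show 1 - t < 1 by linarith [ht.1]))).exists
  obtain ⟨y₀, hy₀⟩ := eventually_atBot.1
    ((tendsto_cdf_atBot ν).eventually
      (eventually_lt_nhds (show (0:ℝ) < 1 - t by linarith [ht.2])))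
  have hbdd : BddBelow {y | 1 - t ≤ cdf ν y} :=
    ⟨y₀, fun z hz => le_of_not_gt fun hzy => (hy₀ z hzy.le).not_ge hz⟩
  rw [eq_sInf_cdf ν ht.1.le]
  constructor
  · intro h
    by_contra! h'
    exact (csInf_le hbdd h').not_gt h
  · intro h
    obtain ⟨z, hz, hyz⟩ := ((((cdf ν).right_continuous y).mono Ioi_subset_Ici_self).eventually
      (eventually_lt_nhds h)).and self_mem_nhdsWithin |>.exists
    exact hyz.trans_le (le_csInf hne fun w hw =>
      le_of_not_gt fun hwz => ((cdf ν).mono hwz.le |>.trans_lt hz).not_ge hw)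

lemma antitoneOn : AntitoneOn (decreasingRearrangement ν) (Ioo 0 1) := by
  intro t ht t' ht' htt'
  by_contra! h
  have := (lt_iff ν ht' _).1 h
  exact (lt_irrefl _) ((lt_iff ν ht _).2 (by linarith))

lemma aemeasurable : AEMeasurable (decreasingRearrangement ν) (volume.restrict (Ioo 0 1)) :=
  aemeasurable_restrict_of_antitoneOn measurableSet_Ioo (antitoneOn ν)

lemma map_volume : (volume.restrict (Ioo 0 1)).map (decreasingRearrangement ν) = ν := by
  have := Measure.isProbabilityMeasure_map (aemeasurable ν)
  refine Measure.ext_of_Iic _ _ fun y => ?_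
  have hpre : decreasingRearrangement ν ⁻¹' Ioi y ∩ Ioo 0 1 = Ioo 0 (1 - cdf ν y) := by
    ext t
    simp only [mem_inter_iff, mem_preimage, mem_Ioi, mem_Ioo]
    constructor
    · rintro ⟨h, h0, h1⟩
      exact ⟨h0, by linarith [(lt_iff ν ⟨h0, h1⟩ y).1 h]⟩
    · rintro ⟨h0, h1⟩
      have h1' : t < 1 := by linarith [cdf_nonneg ν y]
      exact ⟨(lt_iff ν ⟨h0, h1'⟩ y).2 (by linarith), h0, h1'⟩
  rw [← compl_Ioi, prob_compl_eq_one_sub measurableSet_Ioi,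
    prob_compl_eq_one_sub measurableSet_Ioi,
    Measure.map_apply_of_aemeasurable (aemeasurable ν) measurableSet_Ioi,
    Measure.restrict_apply' measurableSet_Ioo, hpre, Real.volume_Ioo, sub_zero,
    ← measureReal_Ioi_eq_one_sub_cdf ν, ofReal_measureReal]

lemma measureReal_Ioi_le {s : ℝ} (hs : s ∈ Ioo 0 1) :
    ν.real (Ioi (decreasingRearrangement ν s)) ≤ s := by
  have := (lt_iff ν hs _).not.1 (lt_irrefl _)
  rw [measureReal_Ioi_eq_one_sub_cdf ν]
  linarith

lemma le_measureReal_Ici {s : ℝ} (hs : s ∈ Ioo 0 1) :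
    s ≤ ν.real (Ici (decreasingRearrangement ν s)) := by
  rw [measureReal_def, ← ENNReal.ofReal_le_iff_le_toReal (measure_ne_top _ _)]
  calc ENNReal.ofReal s = volume (Ioc 0 s) := by simp
    _ ≤ volume
        (decreasingRearrangement ν ⁻¹' Ici (decreasingRearrangement ν s) ∩ Ioo 0 1) :=
      measure_mono fun t ht =>
        ⟨antitoneOn ν ⟨ht.1, ht.2.trans_lt hs.2⟩ hs ht.2, ht.1, ht.2.trans_lt hs.2⟩
    _ = ν (Ici (decreasingRearrangement ν s)) := by
      rw [← Measure.restrict_apply' measurableSet_Ioo,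
        ← Measure.map_apply_of_aemeasurable (aemeasurable ν) measurableSet_Ici, map_volume]

lemma setIntegral_Ioo_eq_integral_max_add (hν : Integrable id ν) {s : ℝ} (hs : s ∈ Ioo 0 1) :
    ∫ t in Ioo 0 s, decreasingRearrangement ν t =
      ∫ y, max (y - decreasingRearrangement ν s) 0 ∂ν + decreasingRearrangement ν s * s := by
  set c := decreasingRearrangement ν s
  set φ : ℝ → ℝ := fun y => max (y - c) 0
  have hφ : AEStronglyMeasurable φ
      ((volume.restrict (Ioo 0 1)).map (decreasingRearrangement ν)) := by
    fun_prop
  have hφν : Integrable φ ((volume.restrict (Ioo 0 1)).map (decreasingRearrangement ν)) := by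
    rw [map_volume]; exact (hν.sub (integrable_const c)).pos_part
  have hφQ : IntegrableOn (fun t => φ (decreasingRearrangement ν t)) (Ioo 0 s) :=
    IntegrableOn.mono_set ((integrable_map_measure hφ (aemeasurable ν)).1 hφν)
      (Ioo_subset_Ioo_right hs.2.le)
  have hc_le : ∀ t ∈ Ioo 0 s, c ≤ decreasingRearrangement ν t := fun t ht =>
    antitoneOn ν ⟨ht.1, ht.2.trans hs.2⟩ hs ht.2.le
  calc ∫ t in Ioo 0 s, decreasingRearrangement ν t
      = ∫ t in Ioo 0 s, (φ (decreasingRearrangement ν t) + c) :=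
        setIntegral_congr_fun measurableSet_Ioo fun t ht => by
          simp [φ, max_eq_left (sub_nonneg.2 (hc_le t ht))]
    _ = (∫ t in Ioo 0 s, φ (decreasingRearrangement ν t)) + c * s := by
        rw [integral_add hφQ (integrable_const c), setIntegral_const,
          Real.volume_real_Ioo_of_le hs.1.le, smul_eq_mul, sub_zero, mul_comm]
    _ = (∫ t in Ioo 0 1, φ (decreasingRearrangement ν t)) + c * s := by
        rw [setIntegral_eq_of_subset_of_forall_sdiff_eq_zero measurableSet_Ioo
          (Ioo_subset_Ioo_right hs.2.le) fun t ht => ?_]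
        have : decreasingRearrangement ν t ≤ c :=
          antitoneOn ν hs ht.1 (le_of_not_gt fun h => ht.2 ⟨ht.1.1, h⟩)
        simp [φ, this]
    _ = ∫ y, φ y ∂ν + c * s := by
        rw [← integral_map (aemeasurable ν) hφ, map_volume]

end decreasingRearrangement

lemma rr_eq_decreasingRearrangement {f : ℝ → ℝ}
    (hf : AEMeasurable f (volume.restrict (Ioo 0 1))) :
    rr f = decreasingRearrangement ((volume.restrict (Ioo 0 1)).map f) := by
  funext t
  unfold rr decreasingRearrangement
  congr 1
  ext y
  rw [mem_ofPred_eq, mem_ofPred_eq, Measure.map_apply_of_aemeasurable hf measurableSet_Ioi,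
    Measure.restrict_apply' measurableSet_Ioo, inter_comm]
  rfl

theorem integral_rr_eq_sSup (f : ℝ → ℝ) (hf : IntegrableOn f (Ioo (0:ℝ) 1))
    (s : ℝ) (hs : s ∈ Ioo (0:ℝ) 1) :
    (∫ t in Ioo (0:ℝ) s, rr f t) =
      sSup {I : ℝ | ∃ a : ℝ → ℝ, Measurable a ∧ (∀ u, a u ∈ Icc (0:ℝ) 1) ∧
        (∫ u in Ioo (0:ℝ) 1, a u) = s ∧ I = ∫ u in Ioo (0:ℝ) 1, f u * a u} := by
  have hfm : AEMeasurable f (volume.restrict (Ioo 0 1)) := hf.aemeasurable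
  have := Measure.isProbabilityMeasure_map hfm
  have hν : Integrable id ((volume.restrict (Ioo 0 1)).map f) :=
    (integrable_map_measure aestronglyMeasurable_id hfm).2 hf
  rw [rr_eq_decreasingRearrangement hfm,
    decreasingRearrangement.setIntegral_Ioo_eq_integral_max_add _ hν hs,
    integral_map hfm (by fun_prop)]
  exact (isGreatest_integral_mul hf (decreasingRearrangement.measureReal_Ioi_le _ hs)
    (decreasingRearrangement.le_measureReal_Ici _ hs)).csSup_eq.symm
end

section
/- Let f : (0,1) → ℝ be integrable, 0 < s < 1, and suppose a : (0,1) → [0,1] is measurable with ∫ a dm = s and ∫ f·a dm = ∫₀ˢ λ(t; f) dt. If λ(f) is not constant on any left neighbourhood of s, then a equals the indicator function of {u : f(u) > λ(s; f)} almost everywhere. -/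
open MeasureTheory Set

/-!
Write `φ c = m {f > c}` for the distribution function of `f` on `(0,1)`. The rearrangement
satisfies `c < λ t ↔ t < φ c`, so `λ` and `f` are equimeasurable and, for every level `l`,
`∫₀^{φ l} λ = ∫_{f > l} f`. Take `l = λ s`. If `φ l < s`, then `λ` would be constant (equal to
`l`) on `(φ l, s)`; so non-constancy gives `φ l = s`. Then `1_{f > l}` has the same mass `s` as `a`
and the same integral against `f`. The bathtub argument finishes: `(f - l) (1_{f > l} - a) ≥ 0` has
integral zero, so `a = 1_{f > l}` off `{f = l}`, and equality of masses settles `{f = l}`.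
-/

open Filter Topology
open scoped ENNReal

-- chosen so that `rr f t` is definitionally `sInf {c | superlevelMeasure f c ≤ ENNReal.ofReal t}`
noncomputable def superlevelMeasure (f : ℝ → ℝ) (c : ℝ) : ℝ≥0∞ :=
  volume {u ∈ Ioo (0:ℝ) 1 | c < f u}

section Rearrangement

variable {f : ℝ → ℝ}

lemma superlevelMeasure_eq_restrict (c : ℝ) :
    superlevelMeasure f c = volume.restrict (Ioo (0:ℝ) 1) {u | c < f u} := by
  rw [Measure.restrict_apply' measurableSet_Ioo, superlevelMeasure]
  congr 1
  ext u
  exact and_comm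

lemma superlevelMeasure_antitone : Antitone (superlevelMeasure f) :=
  fun _ _ hcc' => measure_mono fun _ hu => ⟨hu.1, hcc'.trans_lt hu.2⟩

lemma superlevelMeasure_le_one (c : ℝ) : superlevelMeasure f c ≤ 1 :=
  (measure_mono fun _ hu => hu.1).trans_eq (by simp)

lemma superlevelMeasure_ne_top (c : ℝ) : superlevelMeasure f c ≠ ∞ :=
  ne_top_of_le_ne_top ENNReal.one_ne_top (superlevelMeasure_le_one c)

lemma superlevelMeasure_le_of_forall_gt {c : ℝ} {x : ℝ≥0∞}
    (h : ∀ c' > c, superlevelMeasure f c' ≤ x) : superlevelMeasure f c ≤ x := by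
  have hunion : {u ∈ Ioo (0:ℝ) 1 | c < f u} =
      ⋃ n : ℕ, {u ∈ Ioo (0:ℝ) 1 | c + 1 / (n + 1) < f u} := by
    ext u
    simp only [mem_ofPred_eq, mem_iUnion]
    constructor
    · rintro ⟨hu, hcu⟩
      obtain ⟨n, hn⟩ := exists_nat_one_div_lt (sub_pos.2 hcu)
      exact ⟨n, hu, by linarith⟩
    · rintro ⟨n, hu, hcu⟩
      exact ⟨hu, (lt_add_of_pos_right c (by positivity)).trans hcu⟩
  have hmono : Monotone fun n : ℕ => {u ∈ Ioo (0:ℝ) 1 | c + 1 / (n + 1) < f u} := by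
    intro m n hmn u hu
    exact ⟨hu.1, lt_of_le_of_lt (by gcongr) hu.2⟩
  rw [superlevelMeasure, hunion, hmono.measure_iUnion]
  exact iSup_le fun n => h _ (lt_add_of_pos_right c (by positivity))

lemma exists_superlevelMeasure_le_ofReal (hf : AEMeasurable f (volume.restrict (Ioo (0:ℝ) 1)))
    {t : ℝ} (ht : 0 < t) : ∃ c, superlevelMeasure f c ≤ ENNReal.ofReal t := by
  have hlim : Tendsto (superlevelMeasure f) atTop (𝓝 0) := by
    have hempty : (⋂ c : ℝ, {u | c < f u}) = ∅ :=
      eq_empty_of_forall_notMem fun u hu => lt_irrefl (f u) (mem_iInter.1 hu (f u))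
    have h := tendsto_measure_iInter_atTop (μ := volume.restrict (Ioo (0:ℝ) 1))
        (s := fun c : ℝ => {u | c < f u})
        (fun c => nullMeasurableSet_lt aemeasurable_const hf)
        (fun c c' hcc' u hu => hcc'.trans_lt hu) ⟨0, measure_ne_top _ _⟩
    rwa [hempty, measure_empty, Function.comp_def,
      ← funext (superlevelMeasure_eq_restrict (f := f))] at h
  exact (hlim.eventually (gt_mem_nhds (ENNReal.ofReal_pos.2 ht))).exists.imp fun _ => le_of_lt

lemma exists_ofReal_lt_superlevelMeasure {t : ℝ} (ht : t < 1) :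
    ∃ c, ENNReal.ofReal t < superlevelMeasure f c := by
  have hlim : Tendsto (superlevelMeasure f) atBot (𝓝 1) := by
    have huniv : (⋃ c : ℝ, {u | c < f u}) = univ :=
      eq_univ_of_forall fun u => mem_iUnion.2 ⟨f u - 1, by simp⟩
    have h := tendsto_measure_iUnion_atBot (μ := volume.restrict (Ioo (0:ℝ) 1))
        (s := fun c : ℝ => {u | c < f u})
        (fun c c' hcc' u hu => hcc'.trans_lt hu)
    rwa [huniv, Measure.restrict_apply_univ, Real.volume_Ioo, sub_zero, ENNReal.ofReal_one,
      Function.comp_def, ← funext (superlevelMeasure_eq_restrict (f := f))] at h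
  have : ENNReal.ofReal t < 1 := by simpa using ht
  exact (hlim.eventually (lt_mem_nhds this)).exists

lemma rr_le_of_superlevelMeasure_le {t c : ℝ} (ht : t < 1)
    (h : superlevelMeasure f c ≤ ENNReal.ofReal t) : rr f t ≤ c := by
  obtain ⟨b, hb⟩ := exists_ofReal_lt_superlevelMeasure (f := f) ht
  refine csInf_le ⟨b, fun c' hc' => ?_⟩ h
  by_contra! hlt
  exact lt_irrefl _ (hb.trans_le ((superlevelMeasure_antitone hlt.le).trans hc'))

lemma superlevelMeasure_rr_le (hf : AEMeasurable f (volume.restrict (Ioo (0:ℝ) 1))) {t : ℝ}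
    (ht : 0 < t) : superlevelMeasure f (rr f t) ≤ ENNReal.ofReal t :=
  superlevelMeasure_le_of_forall_gt fun c hc => by
    obtain ⟨b, hb, hbc⟩ := exists_lt_of_csInf_lt (exists_superlevelMeasure_le_ofReal hf ht) hc
    exact (superlevelMeasure_antitone hbc.le).trans hb

lemma lt_rr_iff (hf : AEMeasurable f (volume.restrict (Ioo (0:ℝ) 1))) {t : ℝ}
    (ht : t ∈ Ioo (0:ℝ) 1) {c : ℝ} : c < rr f t ↔ t < (superlevelMeasure f c).toReal := by
  rw [← ENNReal.ofReal_lt_iff_lt_toReal ht.1.le (superlevelMeasure_ne_top c)]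
  constructor
  · intro hc
    by_contra! h
    exact (rr_le_of_superlevelMeasure_le ht.2 h).not_gt hc
  · intro h
    by_contra! hc
    exact ((superlevelMeasure_antitone hc).trans (superlevelMeasure_rr_le hf ht.1)).not_gt h

lemma rr_antitoneOn (hf : AEMeasurable f (volume.restrict (Ioo (0:ℝ) 1))) :
    AntitoneOn (rr f) (Ioo 0 1) := fun _ ht _ ht' htt' =>
  le_of_forall_lt fun _ hc => (lt_rr_iff hf ht).2 (htt'.trans_lt ((lt_rr_iff hf ht').1 hc))

lemma aemeasurable_rr (hf : AEMeasurable f (volume.restrict (Ioo (0:ℝ) 1))) :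
    AEMeasurable (rr f) (volume.restrict (Ioo (0:ℝ) 1)) :=
  aemeasurable_restrict_of_antitoneOn measurableSet_Ioo (rr_antitoneOn hf)

lemma volume_restrict_setOf_lt_rr (hf : AEMeasurable f (volume.restrict (Ioo (0:ℝ) 1))) (c : ℝ) :
    volume.restrict (Ioo (0:ℝ) 1) {t | c < rr f t} = superlevelMeasure f c := by
  have hset : {t | c < rr f t} ∩ Ioo 0 1 = Ioo 0 (superlevelMeasure f c).toReal := by
    ext t
    simp only [mem_inter_iff, mem_ofPred_eq, mem_Ioo]
    constructor
    · rintro ⟨h, ht⟩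
      exact ⟨ht.1, (lt_rr_iff hf ht).1 h⟩
    · rintro ⟨h0, h⟩
      have ht1 : t < 1 := h.trans_le (ENNReal.toReal_le_of_le_ofReal zero_le_one
        (ENNReal.ofReal_one ▸ superlevelMeasure_le_one c))
      exact ⟨(lt_rr_iff hf ⟨h0, ht1⟩).2 h, h0, ht1⟩
  rw [Measure.restrict_apply' measurableSet_Ioo, hset, Real.volume_Ioo, sub_zero,
    ENNReal.ofReal_toReal (superlevelMeasure_ne_top c)]

lemma map_rr_eq_map (hf : AEMeasurable f (volume.restrict (Ioo (0:ℝ) 1))) :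
    (volume.restrict (Ioo (0:ℝ) 1)).map (rr f) = (volume.restrict (Ioo (0:ℝ) 1)).map f := by
  set μ := volume.restrict (Ioo (0:ℝ) 1)
  have hrr := aemeasurable_rr hf
  have hIoi : ∀ c, μ.map (rr f) (Ioi c) = μ.map f (Ioi c) := fun c => by
    rw [Measure.map_apply_of_aemeasurable hrr measurableSet_Ioi,
      Measure.map_apply_of_aemeasurable hf measurableSet_Ioi]
    exact (volume_restrict_setOf_lt_rr hf c).trans (superlevelMeasure_eq_restrict c)
  have huniv : μ.map (rr f) univ = μ.map f univ := by
    rw [Measure.map_apply_of_aemeasurable hrr MeasurableSet.univ,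
      Measure.map_apply_of_aemeasurable hf MeasurableSet.univ, preimage_univ, preimage_univ]
  refine Measure.ext_of_Iic _ _ fun c => ?_
  rw [← compl_Ioi, measure_compl measurableSet_Ioi (measure_ne_top _ _),
    measure_compl measurableSet_Ioi (measure_ne_top _ _), hIoi, huniv]

lemma setIntegral_rr_eq (hf : AEMeasurable f (volume.restrict (Ioo (0:ℝ) 1))) (l : ℝ) :
    ∫ t in Ioo 0 (superlevelMeasure f l).toReal, rr f t =
      ∫ u in Ioo 0 1, {u | l < f u}.indicator f u := by
  set μ := volume.restrict (Ioo (0:ℝ) 1)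
  set p := (superlevelMeasure f l).toReal
  have hp1 : p ≤ 1 :=
    ENNReal.toReal_le_of_le_ofReal zero_le_one (ENNReal.ofReal_one ▸ superlevelMeasure_le_one l)
  have hg : StronglyMeasurable ((Ioi l).indicator id) :=
    (stronglyMeasurable_id.indicator measurableSet_Ioi)
  calc ∫ t in Ioo 0 p, rr f t
      = ∫ t, (Ioo 0 p).indicator (rr f) t ∂μ := by
        rw [integral_indicator measurableSet_Ioo, Measure.restrict_restrict measurableSet_Ioo,
          inter_eq_left.2 (Ioo_subset_Ioo_right hp1)]
    _ = ∫ t, (Ioi l).indicator id (rr f t) ∂μ :=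
        setIntegral_congr_fun measurableSet_Ioo fun t ht => by
          simp only [indicator, mem_Ioo, mem_Ioi, lt_rr_iff hf ht, ht.1, true_and, id, p]
    _ = ∫ x, (Ioi l).indicator id x ∂(μ.map (rr f)) :=
        (integral_map (aemeasurable_rr hf) hg.aestronglyMeasurable).symm
    _ = ∫ x, (Ioi l).indicator id x ∂(μ.map f) := by rw [map_rr_eq_map hf]
    _ = ∫ u, {u | l < f u}.indicator f u ∂μ := integral_map hf hg.aestronglyMeasurable

lemma superlevelMeasure_rr_eq_ofReal (hf : AEMeasurable f (volume.restrict (Ioo (0:ℝ) 1)))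
    {s : ℝ} (hs : s ∈ Ioo (0:ℝ) 1)
    (hnc : ∀ ε ∈ Ioo (0:ℝ) s, ∃ t₁ ∈ Ioo (s - ε) s, ∃ t₂ ∈ Ioo (s - ε) s, rr f t₁ ≠ rr f t₂) :
    superlevelMeasure f (rr f s) = ENNReal.ofReal s := by
  refine (superlevelMeasure_rr_le hf hs.1).antisymm ?_
  by_contra! hlt
  set p := (superlevelMeasure f (rr f s)).toReal
  have hp0 : 0 ≤ p := ENNReal.toReal_nonneg
  have hps : p < s := ENNReal.toReal_lt_of_lt_ofReal hlt
  have hconst : ∀ t ∈ Ioo p s, rr f t = rr f s := fun t ht => by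
    have ht01 : t ∈ Ioo (0:ℝ) 1 := ⟨hp0.trans_lt ht.1, ht.2.trans hs.2⟩
    refine le_antisymm (not_lt.1 fun h => ?_) (rr_antitoneOn hf ht01 hs ht.2.le)
    exact lt_asymm ht.1 ((lt_rr_iff hf ht01).1 h)
  obtain ⟨t₁, ht₁, t₂, ht₂, hne⟩ := hnc ((s - p) / 2) ⟨by linarith, by linarith⟩
  have hsub : Ioo (s - (s - p) / 2) s ⊆ Ioo p s := Ioo_subset_Ioo_left (by linarith)
  exact hne ((hconst t₁ (hsub ht₁)).trans (hconst t₂ (hsub ht₂)).symm)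

end Rearrangement

lemma sub_mul_indicator_sub_nonneg {x l y : ℝ} (hy : y ∈ Icc (0:ℝ) 1) :
    0 ≤ (x - l) * ((Ioi l).indicator (fun _ => (1:ℝ)) x - y) := by
  by_cases hx : x ∈ Ioi l
  · rw [indicator_of_mem hx]
    exact mul_nonneg (sub_nonneg.2 (le_of_lt hx)) (sub_nonneg.2 hy.2)
  · rw [indicator_of_notMem hx]
    exact mul_nonneg_of_nonpos_of_nonpos (sub_nonpos.2 (not_lt.1 hx)) (by linarith [hy.1])

theorem ae_eq_indicator_of_integral_mul_eq {α : Type*} [MeasurableSpace α] {μ : Measure α}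
    [IsFiniteMeasure μ] {f a : α → ℝ} {l : ℝ} (hf : Integrable f μ) (ha : Integrable a μ)
    (ha01 : ∀ᵐ u ∂μ, a u ∈ Icc (0:ℝ) 1)
    (hmass : ∫ u, a u ∂μ = μ.real {u | l < f u})
    (hgain : ∫ u, f u * a u ∂μ = ∫ u, {u | l < f u}.indicator f u ∂μ) :
    a =ᵐ[μ] {u | l < f u}.indicator (fun _ => (1:ℝ)) := by
  set A := {u | l < f u}
  set b := A.indicator (fun _ => (1:ℝ))
  have hA : NullMeasurableSet A μ := nullMeasurableSet_lt aemeasurable_const hf.aemeasurable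
  have hb : Integrable b μ := (integrable_const 1).indicator₀ hA
  have hbmass : ∫ u, b u ∂μ = μ.real A := by
    rw [integral_indicator₀ hA, setIntegral_const, smul_eq_mul, mul_one]
  have hfa : Integrable (fun u => f u * a u) μ :=
    hf.mul_bdd ha.aestronglyMeasurable (c := 1) <| ha01.mono fun u hu => by
      rw [Real.norm_eq_abs, abs_le]; exact ⟨by linarith [hu.1], hu.2⟩
  set gap := fun u => (f u - l) * (b u - a u)
  have hgap_eq : gap = fun u => (A.indicator f u - f u * a u) - l * (b u - a u) := by
    funext u
    by_cases huA : u ∈ A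
    · simp only [gap, b, indicator_of_mem huA]
      ring
    · simp only [gap, b, indicator_of_notMem huA]
      ring
  have hgain_int : Integrable (fun u => A.indicator f u - f u * a u) μ := (hf.indicator₀ hA).sub hfa
  have hmass_int : Integrable (fun u => l * (b u - a u)) μ := (hb.sub ha).const_mul l
  have hgap_zero : gap =ᵐ[μ] 0 := by
    refine ((integral_eq_iff_of_ae_le (integrable_zero _ _ μ)
      (hgap_eq ▸ hgain_int.sub hmass_int) ?_).1 ?_).symm
    · filter_upwards [ha01] with u hu using sub_mul_indicator_sub_nonneg hu
    · rw [integral_zero', hgap_eq, integral_sub hgain_int hmass_int,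
        integral_sub (hf.indicator₀ hA) hfa, integral_const_mul, integral_sub hb ha, hgain,
        hbmass, hmass, sub_self, sub_self, mul_zero, sub_zero]
  -- on `{f = l}` the gap vanishes whatever `a` is, but there `b = 0 ≤ a`
  have hba : b ≤ᵐ[μ] a := by
    filter_upwards [hgap_zero, ha01] with u hu hau
    rcases mul_eq_zero.1 hu with h | h
    · have huA : u ∉ A := fun huA => (show l < f u from huA).ne (by linarith)
      simpa only [b, indicator_of_notMem huA] using hau.1
    · linarith
  exact ((integral_eq_iff_of_ae_le hb ha hba).1 (hbmass.trans hmass.symm)).symm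

theorem maximiser_is_indicator_general (f : ℝ → ℝ) (hf : IntegrableOn f (Ioo (0:ℝ) 1))
    (s : ℝ) (hs : s ∈ Ioo (0:ℝ) 1)
    (a : ℝ → ℝ) (ha01 : ∀ u, a u ∈ Icc (0:ℝ) 1)
    (hsum : (∫ u in Ioo (0:ℝ) 1, a u) = s)
    (hopt : (∫ u in Ioo (0:ℝ) 1, f u * a u) = ∫ t in Ioo (0:ℝ) s, rr f t)
    (hnc : ∀ ε ∈ Ioo (0:ℝ) s, ∃ t₁ ∈ Ioo (s - ε) s, ∃ t₂ ∈ Ioo (s - ε) s,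
      rr f t₁ ≠ rr f t₂) :
    ∀ᵐ u ∂(volume.restrict (Ioo (0:ℝ) 1)),
      a u = Set.indicator {u : ℝ | rr f s < f u} (fun _ => (1:ℝ)) u := by
  have hfm : AEMeasurable f (volume.restrict (Ioo (0:ℝ) 1)) := hf.aemeasurable
  have hlevel := superlevelMeasure_rr_eq_ofReal hfm hs hnc
  have hmass : (volume.restrict (Ioo (0:ℝ) 1)).real {u | rr f s < f u} = s := by
    rw [measureReal_def, ← superlevelMeasure_eq_restrict, hlevel, ENNReal.toReal_ofReal hs.1.le]
  refine ae_eq_indicator_of_integral_mul_eq hf (.of_integral_ne_zero (hsum ▸ hs.1.ne'))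
    (ae_of_all _ ha01) (hsum.trans hmass.symm) ?_
  rw [hopt, ← setIntegral_rr_eq hfm, hlevel, ENNReal.toReal_ofReal hs.1.le]

theorem maximiser_is_indicator (f : ℝ → ℝ) (hf : IntegrableOn f (Ioo (0:ℝ) 1))
    (s : ℝ) (hs : s ∈ Ioo (0:ℝ) 1)
    (a : ℝ → ℝ) (ha : Measurable a) (ha01 : ∀ u, a u ∈ Icc (0:ℝ) 1)
    (hsum : (∫ u in Ioo (0:ℝ) 1, a u) = s)
    (hopt : (∫ u in Ioo (0:ℝ) 1, f u * a u) = ∫ t in Ioo (0:ℝ) s, rr f t)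
    (hnc : ∀ ε ∈ Ioo (0:ℝ) s, ∃ t₁ ∈ Ioo (s - ε) s, ∃ t₂ ∈ Ioo (s - ε) s,
      rr f t₁ ≠ rr f t₂) :
    ∀ᵐ u ∂(volume.restrict (Ioo (0:ℝ) 1)),
      a u = Set.indicator {u : ℝ | rr f s < f u} (fun _ => (1:ℝ)) u :=
  maximiser_is_indicator_general f hf s hs a ha01 hsum hopt hnc
end

section
/- Let f, f₁, f₂ : (0,1) → ℝ be integrable with f = (f₁ + f₂)/2 and λ(f₁) = λ(f₂) = λ(f) (equality of decreasing rearrangements as functions on [0,1)). Then f = f₁ = f₂ almost everywhere. -/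
open MeasureTheory Set

open Filter
open scoped ENNReal

/-! ### Auxiliary machinery -/

/-- Restriction of Lebesgue measure to `(0,1)`. -/
noncomputable def nuA : Measure ℝ := volume.restrict (Ioo (0:ℝ) 1)

/-- The distribution function of `g` with respect to `nuA`. -/
noncomputable def ddA (g : ℝ → ℝ) (s : ℝ) : ℝ≥0∞ := nuA {u | s < g u}

lemma nuA_univ : nuA univ = 1 := by
  simp [nuA, Real.volume_Ioo]

instance : IsFiniteMeasure nuA := ⟨by rw [nuA_univ]; exact ENNReal.one_lt_top⟩

lemma rrA_eq (g : ℝ → ℝ) (t : ℝ) :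
    rr g t = sInf {s | ddA g s ≤ ENNReal.ofReal t} := by
  unfold rr ddA nuA
  congr 1
  ext s
  have h : volume {u | u ∈ Ioo (0:ℝ) 1 ∧ s < g u}
      = (volume.restrict (Ioo (0:ℝ) 1)) {u | s < g u} := by
    rw [Measure.restrict_apply' measurableSet_Ioo]
    congr 1
    ext u
    simp only [mem_setOf_eq, mem_inter_iff]
    tauto
  simp only [mem_setOf_eq, sep_setOf, h]

lemma ddA_anti (g : ℝ → ℝ) : Antitone (ddA g) :=
  fun _ _ hab => measure_mono (fun _ hu => lt_of_le_of_lt hab hu)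

lemma ddA_le_one (g : ℝ → ℝ) (s : ℝ) : ddA g s ≤ 1 := by
  rw [← nuA_univ]; exact measure_mono (subset_univ _)

lemma ddA_sup_neg (g : ℝ → ℝ) : ⨆ n : ℕ, ddA g (-(n:ℝ)) = 1 := by
  have hmono : Monotone (fun n : ℕ => {u : ℝ | -(n:ℝ) < g u}) := by
    intro m n hmn u hu
    simp only [mem_setOf_eq] at hu ⊢
    have : (m:ℝ) ≤ (n:ℝ) := by exact_mod_cast hmn
    linarith
  have hU : (⋃ n : ℕ, {u : ℝ | -(n:ℝ) < g u}) = univ := by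
    ext u; simp only [mem_iUnion, mem_setOf_eq, mem_univ, iff_true]
    obtain ⟨n, hn⟩ := exists_nat_gt (-(g u))
    exact ⟨n, by linarith⟩
  calc ⨆ n : ℕ, ddA g (-(n:ℝ)) = nuA (⋃ n : ℕ, {u : ℝ | -(n:ℝ) < g u}) :=
        (hmono.measure_iUnion).symm
    _ = 1 := by rw [hU, nuA_univ]

lemma ddA_sup_seq (g : ℝ → ℝ) (s : ℝ) :
    ddA g s = ⨆ n : ℕ, ddA g (s + 1/(n+1)) := by
  have hmono : Monotone (fun n : ℕ => {u : ℝ | s + 1/((n:ℝ)+1) < g u}) := by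
    intro m n hmn u hu
    simp only [mem_setOf_eq] at hu ⊢
    have hc : (m:ℝ) ≤ (n:ℝ) := by exact_mod_cast hmn
    have : 1/((n:ℝ)+1) ≤ 1/((m:ℝ)+1) := by
      apply one_div_le_one_div_of_le
      · positivity
      · linarith
    linarith
  have hU : (⋃ n : ℕ, {u : ℝ | s + 1/((n:ℝ)+1) < g u}) = {u : ℝ | s < g u} := by
    ext u
    simp only [mem_iUnion, mem_setOf_eq]
    constructor
    · rintro ⟨n, hn⟩
      have : (0:ℝ) < 1/((n:ℝ)+1) := by positivity
      linarith
    · intro hu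
      obtain ⟨n, hn⟩ := exists_nat_one_div_lt (sub_pos.mpr hu)
      exact ⟨n, by linarith⟩
  calc ddA g s = nuA (⋃ n : ℕ, {u : ℝ | s + 1/((n:ℝ)+1) < g u}) := by rw [hU]; rfl
    _ = ⨆ n : ℕ, ddA g (s + 1/(n+1)) := by
        rw [hmono.measure_iUnion]
        rfl

lemma ddA_inf_nat (g : ℝ → ℝ) (hg : AEMeasurable g nuA) :
    ⨅ n : ℕ, ddA g (n:ℝ) = 0 := by
  have hanti : Antitone (fun n : ℕ => {u : ℝ | (n:ℝ) < g u}) := by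
    intro m n hmn u hu
    simp only [mem_setOf_eq] at hu ⊢
    have : (m:ℝ) ≤ (n:ℝ) := by exact_mod_cast hmn
    linarith
  have hI : (⋂ n : ℕ, {u : ℝ | (n:ℝ) < g u}) = ∅ := by
    ext u
    simp only [mem_iInter, mem_setOf_eq, mem_empty_iff_false, iff_false, not_forall, not_lt]
    obtain ⟨n, hn⟩ := exists_nat_gt (g u)
    exact ⟨n, hn.le⟩
  have hmeas : ∀ n : ℕ, NullMeasurableSet {u : ℝ | (n:ℝ) < g u} nuA := by
    intro n
    exact hg.nullMeasurable measurableSet_Ioi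
  have := hanti.measure_iInter (μ := nuA) hmeas
    ⟨0, by simp only [Nat.cast_zero]
           exact (lt_of_le_of_lt (ddA_le_one g 0) ENNReal.one_lt_top).ne⟩
  rw [hI] at this
  simp only [measure_empty] at this
  exact this.symm

lemma bddBelow_SA (g : ℝ → ℝ) {t : ℝ} (ht1 : t < 1) :
    BddBelow {s | ddA g s ≤ ENNReal.ofReal t} := by
  have h1 : ENNReal.ofReal t < 1 := ENNReal.ofReal_lt_one.mpr ht1
  rw [← ddA_sup_neg g] at h1
  obtain ⟨n, hn⟩ := lt_iSup_iff.mp h1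
  refine ⟨-(n:ℝ), fun x hx => ?_⟩
  by_contra hlt
  push_neg at hlt
  exact absurd (le_trans (ddA_anti g hlt.le) hx) (not_le.mpr hn)

lemma nonempty_SA (g : ℝ → ℝ) (hg : AEMeasurable g nuA) {t : ℝ} (ht0 : 0 < t) :
    {s | ddA g s ≤ ENNReal.ofReal t}.Nonempty := by
  have h0 : (0:ℝ≥0∞) < ENNReal.ofReal t := ENNReal.ofReal_pos.mpr ht0
  rw [← ddA_inf_nat g hg] at h0
  obtain ⟨n, hn⟩ := iInf_lt_iff.mp h0
  exact ⟨(n:ℝ), hn.le⟩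

lemma ddA_le_iff (g : ℝ → ℝ) (hg : AEMeasurable g nuA) {t : ℝ} (ht : t ∈ Ioo (0:ℝ) 1)
    (s : ℝ) : ddA g s ≤ ENNReal.ofReal t ↔ rr g t ≤ s := by
  rw [rrA_eq]
  constructor
  · intro h
    exact csInf_le (bddBelow_SA g ht.2) h
  · intro h
    rw [ddA_sup_seq]
    refine iSup_le fun n => ?_
    have hpos : (0:ℝ) < 1/((n:ℝ)+1) := by positivity
    have h1 : sInf {s | ddA g s ≤ ENNReal.ofReal t} < s + 1/((n:ℝ)+1) :=
      lt_of_le_of_lt h (by linarith)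
    obtain ⟨x, hxS, hx⟩ := (csInf_lt_iff (bddBelow_SA g ht.2) (nonempty_SA g hg ht.1)).mp h1
    exact le_trans (ddA_anti g hx.le) hxS

lemma ddA_le_of (g g₁ : ℝ → ℝ) (hg : AEMeasurable g nuA) (hg₁ : AEMeasurable g₁ nuA)
    (h : ∀ t ∈ Ioo (0:ℝ) 1, rr g₁ t = rr g t) (s : ℝ) : ddA g s ≤ ddA g₁ s := by
  by_contra hlt
  push_neg at hlt
  have hfin1 : ddA g₁ s ≠ ⊤ := (lt_of_le_of_lt (ddA_le_one g₁ s) ENNReal.one_lt_top).ne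
  have hfin : ddA g s ≠ ⊤ := (lt_of_le_of_lt (ddA_le_one g s) ENNReal.one_lt_top).ne
  set a := (ddA g₁ s).toReal with ha
  set b := (ddA g s).toReal with hb
  have hab : a < b := ENNReal.toReal_lt_toReal hfin1 hfin |>.mpr hlt
  have ha0 : 0 ≤ a := ENNReal.toReal_nonneg
  have hb1 : b ≤ 1 := by
    rw [hb, ← ENNReal.toReal_one]
    exact ENNReal.toReal_mono ENNReal.one_ne_top (ddA_le_one g s)
  set t := (a + b) / 2 with htdef
  have ht : t ∈ Ioo (0:ℝ) 1 := ⟨by linarith, by linarith⟩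
  have h1 : ddA g₁ s ≤ ENNReal.ofReal t := by
    rw [← ENNReal.ofReal_toReal hfin1]
    exact ENNReal.ofReal_le_ofReal (by linarith)
  have h2 : ENNReal.ofReal t < ddA g s := by
    rw [← ENNReal.ofReal_toReal hfin]
    exact (ENNReal.ofReal_lt_ofReal_iff_of_nonneg (by linarith)).mpr (by linarith)
  have h3 : rr g₁ t ≤ s := (ddA_le_iff g₁ hg₁ ht s).mp h1
  rw [h t ht] at h3
  exact absurd ((ddA_le_iff g hg ht s).mpr h3) (not_le.mpr h2)

lemma ddA_eq_of_rr (g g₁ : ℝ → ℝ) (hg : AEMeasurable g nuA) (hg₁ : AEMeasurable g₁ nuA)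
    (h : ∀ t ∈ Ico (0:ℝ) 1, rr g₁ t = rr g t) : ddA g₁ = ddA g := by
  funext s
  have h' : ∀ t ∈ Ioo (0:ℝ) 1, rr g₁ t = rr g t := fun t ht => h t ⟨ht.1.le, ht.2⟩
  exact le_antisymm
    (ddA_le_of g₁ g hg₁ hg (fun t ht => (h' t ht).symm) s)
    (ddA_le_of g g₁ hg hg₁ h' s)

lemma mapA_eq (g g₁ : ℝ → ℝ) (hg : AEMeasurable g nuA) (hg₁ : AEMeasurable g₁ nuA)
    (hdd : ddA g₁ = ddA g) :
    Measure.map g₁ nuA = Measure.map g nuA := by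
  have key : ∀ (h : ℝ → ℝ), AEMeasurable h nuA → ∀ a b : ℝ, a < b →
      Measure.map h nuA (Ioc a b) = ddA h a - ddA h b := by
    intro h hh a b hab
    rw [Measure.map_apply_of_aemeasurable hh measurableSet_Ioc]
    have hset : h ⁻¹' (Ioc a b) = {u | a < h u} \ {u | b < h u} := by
      ext u
      simp only [mem_preimage, mem_Ioc, mem_diff, mem_setOf_eq, not_lt]
    have hsub : {u : ℝ | b < h u} ⊆ {u : ℝ | a < h u} :=
      fun u hu => lt_of_le_of_lt hab.le hu
    have hnm : NullMeasurableSet {u : ℝ | b < h u} nuA :=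
      hh.nullMeasurable measurableSet_Ioi
    have hfin : nuA {u : ℝ | b < h u} ≠ ⊤ :=
      (lt_of_le_of_lt (ddA_le_one h b) ENNReal.one_lt_top).ne
    rw [hset, measure_diff hsub hnm hfin]
    rfl
  refine Measure.ext_of_Ioc' _ _ (fun a b hab => ?_) (fun a b hab => ?_)
  · rw [key g₁ hg₁ a b hab]
    exact (lt_of_le_of_lt (le_trans (tsub_le_self) (ddA_le_one g₁ a)) ENNReal.one_lt_top).ne
  · rw [key g₁ hg₁ a b hab, key g hg a b hab, hdd]

/-! ### The strictly convex function `φ(x) = √(1+x²)` -/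

noncomputable def phiA (x : ℝ) : ℝ := Real.sqrt (1 + x^2)

lemma phiA_cont : Continuous phiA := by
  unfold phiA
  fun_prop

lemma phiA_nonneg (x : ℝ) : 0 ≤ phiA x := Real.sqrt_nonneg _

lemma phiA_bound (x : ℝ) : phiA x ≤ 1 + |x| := by
  unfold phiA
  rw [show (1:ℝ) + |x| = Real.sqrt ((1+|x|)^2) from
    (Real.sqrt_sq (by positivity)).symm]
  apply Real.sqrt_le_sqrt
  have := abs_nonneg x
  nlinarith [sq_abs x]

lemma keyA_lt (a b : ℝ) (hne : a ≠ b) :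
    phiA ((a+b)/2) < (phiA a + phiA b)/2 := by
  unfold phiA
  have ha2 : (0:ℝ) < 1 + a^2 := by positivity
  have hb2 : (0:ℝ) < 1 + b^2 := by positivity
  set A := Real.sqrt (1+a^2) with hA
  set B := Real.sqrt (1+b^2) with hB
  have hAp : 0 < A := Real.sqrt_pos.mpr ha2
  have hBp : 0 < B := Real.sqrt_pos.mpr hb2
  have hAs : A^2 = 1 + a^2 := Real.sq_sqrt ha2.le
  have hBs : B^2 = 1 + b^2 := Real.sq_sqrt hb2.le
  have hsq : 0 < (a-b)^2 := by
    have : a - b ≠ 0 := sub_ne_zero.mpr hne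
    positivity
  have hABsq : (A*B)^2 = (1+a^2)*(1+b^2) := by rw [mul_pow, hAs, hBs]
  have hab : 1 + a*b < A*B := by
    rcases le_or_gt (1 + a*b) 0 with h | h
    · exact lt_of_le_of_lt h (mul_pos hAp hBp)
    · nlinarith [mul_pos hAp hBp]
  rw [Real.sqrt_lt' (by positivity)]
  nlinarith

lemma keyA_le (a b : ℝ) : phiA ((a+b)/2) ≤ (phiA a + phiA b)/2 := by
  rcases eq_or_ne a b with h | h
  · subst h
    have : (a+a)/2 = a := by ring
    rw [this]
    linarith
  · exact (keyA_lt a b h).le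

lemma int_phiA (g : ℝ → ℝ) (hg : Integrable g nuA) :
    Integrable (fun u => phiA (g u)) nuA := by
  refine Integrable.mono' ((integrable_const 1).add hg.abs)
    (phiA_cont.comp_aestronglyMeasurable hg.aestronglyMeasurable) ?_
  filter_upwards with u
  rw [Real.norm_of_nonneg (phiA_nonneg _)]
  exact phiA_bound _

lemma integral_phiA_eq (g g₁ : ℝ → ℝ) (hg : AEMeasurable g nuA) (hg₁ : AEMeasurable g₁ nuA)
    (hmap : Measure.map g₁ nuA = Measure.map g nuA) :
    ∫ u, phiA (g₁ u) ∂nuA = ∫ u, phiA (g u) ∂nuA := by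
  rw [← integral_map hg₁ phiA_cont.aestronglyMeasurable, hmap,
    integral_map hg phiA_cont.aestronglyMeasurable]

/-! ### The main theorem -/

theorem eq_of_average_eq_rearrangement (f f₁ f₂ : ℝ → ℝ)
    (hf : IntegrableOn f (Ioo (0:ℝ) 1))
    (hf₁ : IntegrableOn f₁ (Ioo (0:ℝ) 1)) (hf₂ : IntegrableOn f₂ (Ioo (0:ℝ) 1))
    (havg : ∀ u, f u = (f₁ u + f₂ u) / 2)
    (h₁ : ∀ t ∈ Ico (0:ℝ) 1, rr f₁ t = rr f t)
    (h₂ : ∀ t ∈ Ico (0:ℝ) 1, rr f₂ t = rr f t) :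
    (∀ᵐ u ∂(volume.restrict (Ioo (0:ℝ) 1)), f u = f₁ u) ∧
      (∀ᵐ u ∂(volume.restrict (Ioo (0:ℝ) 1)), f u = f₂ u) := by
  have hfI : Integrable f nuA := hf
  have hf₁I : Integrable f₁ nuA := hf₁
  have hf₂I : Integrable f₂ nuA := hf₂
  have hm : AEMeasurable f nuA := hfI.aemeasurable
  have hm₁ : AEMeasurable f₁ nuA := hf₁I.aemeasurable
  have hm₂ : AEMeasurable f₂ nuA := hf₂I.aemeasurable
  have hdd₁ : ddA f₁ = ddA f := ddA_eq_of_rr f f₁ hm hm₁ h₁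
  have hdd₂ : ddA f₂ = ddA f := ddA_eq_of_rr f f₂ hm hm₂ h₂
  have hi₁ : ∫ u, phiA (f₁ u) ∂nuA = ∫ u, phiA (f u) ∂nuA :=
    integral_phiA_eq f f₁ hm hm₁ (mapA_eq f f₁ hm hm₁ hdd₁)
  have hi₂ : ∫ u, phiA (f₂ u) ∂nuA = ∫ u, phiA (f u) ∂nuA :=
    integral_phiA_eq f f₂ hm hm₂ (mapA_eq f f₂ hm hm₂ hdd₂)
  have I12 : Integrable (fun u => (phiA (f₁ u) + phiA (f₂ u))/2) nuA :=
    (((int_phiA f₁ hf₁I).add (int_phiA f₂ hf₂I)).div_const 2)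
  have hnn : 0 ≤ (fun u => (phiA (f₁ u) + phiA (f₂ u))/2 - phiA (f u)) := by
    intro u
    have := keyA_le (f₁ u) (f₂ u)
    simp only [Pi.zero_apply]
    rw [← havg u] at this
    linarith
  have hint : Integrable (fun u => (phiA (f₁ u) + phiA (f₂ u))/2 - phiA (f u)) nuA :=
    I12.sub (int_phiA f hfI)
  have hzero : ∫ u, ((phiA (f₁ u) + phiA (f₂ u))/2 - phiA (f u)) ∂nuA = 0 := by
    rw [integral_sub I12 (int_phiA f hfI), integral_div,
      integral_add (int_phiA f₁ hf₁I) (int_phiA f₂ hf₂I), hi₁, hi₂]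
    ring
  have hae : (fun u => (phiA (f₁ u) + phiA (f₂ u))/2 - phiA (f u)) =ᵐ[nuA] 0 :=
    (integral_eq_zero_iff_of_nonneg hnn hint).mp hzero
  have haeq : ∀ᵐ u ∂nuA, f₁ u = f₂ u := by
    filter_upwards [hae] with u hu
    by_contra hne
    have := keyA_lt (f₁ u) (f₂ u) hne
    simp only [Pi.zero_apply] at hu
    rw [← havg u] at this
    linarith
  constructor
  · filter_upwards [haeq] with u hu
    rw [havg u, hu]
    ring
  · filter_upwards [haeq] with u hu
    rw [havg u, hu]
    ring
end

section
/- Let y ∈ L¹(0,1) and Ω(y) = {x ∈ L¹(0,1) : x ≺ y} (Hardy–Littlewood–Pólya majorisation). If x is an extreme point of Ω(y) and ∫₀ˢ λ(t; y) dt > ∫₀ˢ λ(t; x) dt for all s in an open interval (t₁, t₂) ⊂ (0,1), then the decreasing rearrangement λ(x) is a step function on (t₁, t₂) (i.e., locally constant except at finitely many points on each compact subinterval, in fact taking at most countably many values with each level set of λ(x) in (t₁,t₂) an interval and λ(x) piecewise constant there). -/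
/-!
Suppose `rr x` is not constant on any `[t, t + ε)` with `t ∈ (t₁, t₂)`. Being antitone and
right-continuous, it then takes values `v₀ < v₁ < v₂ < v₃` at points `c > a₁ > a₂ > a₃ > t`.
Choose `m ∈ (v₁, v₂)` and put `g = N • tent m v₃ - P • tent v₀ m`, where `N` and `P` are the masses
of `tent v₀ m ∘ x` and `tent m v₃ ∘ x` (both positive), so that `∫ g ∘ x = 0`. For small `δ` the map
`v ↦ v ± δ g v` is an increasing bijection, hence `rr (x ± δ g ∘ x) = rr x ± δ g ∘ rr x`, and the
partial integrals `∫₀ˢ rr` move by `± δ ∫₀ˢ g ∘ rr x`. That vanishes for `s ∉ [a₃, c]` (since `g`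
vanishes off `(v₀, v₃)` and has mean zero) and is absorbed by the strict gap on `[a₃, c]`. So
`x ± δ g ∘ x ∈ Ω(y)`, and extremality forces `g ∘ x = 0` a.e., i.e. `P = 0`: a contradiction.
Countability of the values follows, since each of them is attained at a rational point.
-/

open MeasureTheory Set

open Filter Topology
open scoped ENNReal NNReal

local notation "ν" => (volume.restrict (Ioo (0:ℝ) 1) : Measure ℝ)

lemma integrable_comp_of_abs_le {α : Type*} [MeasurableSpace α] {μ : Measure α}
    [IsFiniteMeasure μ] {f : α → ℝ} (hf : AEMeasurable f μ) {G : ℝ → ℝ} (hG : Continuous G)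
    {C : ℝ} (hC : ∀ v, |G v| ≤ C) : Integrable (fun u ↦ G (f u)) μ :=
  .of_bound (hG.measurable.comp_aemeasurable hf).aestronglyMeasurable C
    (.of_forall fun u ↦ hC (f u))

lemma ExtremePt.ae_eq_zero_of_add_mem_of_sub_mem {Ω : Set (ℝ → ℝ)} {x h : ℝ → ℝ}
    (hx : ExtremePt Ω x) (h₁ : (fun u ↦ x u + h u) ∈ Ω) (h₂ : (fun u ↦ x u - h u) ∈ Ω) :
    ∀ᵐ u ∂ν, h u = 0 := by
  filter_upwards [hx.2 _ h₁ _ h₂ (.of_forall fun u ↦ by ring)] with u hu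
  linarith

namespace Rearrangement

variable {f : ℝ → ℝ} {s t : ℝ}

noncomputable def distFun (f : ℝ → ℝ) (s : ℝ) : ℝ≥0∞ := ν {u | s < f u}

lemma restrict_Ioo_zero_one_univ : ν univ = 1 := by simp

lemma rr_eq_sInf_distFun (f : ℝ → ℝ) (t : ℝ) :
    rr f t = sInf {s | distFun f s ≤ ENNReal.ofReal t} := by
  simp only [rr, distFun, Measure.restrict_apply' measurableSet_Ioo, ofPred_and, ofPred_mem_eq,
    inter_comm]

lemma distFun_antitone (f : ℝ → ℝ) : Antitone (distFun f) :=
  fun _ _ h ↦ measure_mono fun _ hu ↦ lt_of_le_of_lt h hu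

lemma distFun_le_one (f : ℝ → ℝ) (s : ℝ) : distFun f s ≤ 1 :=
  restrict_Ioo_zero_one_univ ▸ measure_mono (subset_univ _)

lemma distFun_ne_top (f : ℝ → ℝ) (s : ℝ) : distFun f s ≠ ∞ :=
  ne_top_of_le_ne_top ENNReal.one_ne_top (distFun_le_one f s)

lemma tendsto_distFun_atTop (hf : AEMeasurable f ν) : Tendsto (distFun f) atTop (𝓝 0) := by
  have h := tendsto_measure_iInter_atTop (μ := ν) (s := fun s ↦ {u | s < f u})
    (fun _ ↦ hf.nullMeasurable measurableSet_Ioi) (fun _ _ h _ hu ↦ lt_of_le_of_lt h hu)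
    ⟨0, measure_ne_top _ _⟩
  have hempty : (⋂ s : ℝ, {u | s < f u}) = ∅ :=
    eq_empty_of_forall_notMem fun u hu ↦ lt_irrefl (f u) (mem_iInter.1 hu (f u))
  rwa [hempty, measure_empty] at h

lemma tendsto_distFun_atBot (f : ℝ → ℝ) : Tendsto (distFun f) atBot (𝓝 1) := by
  have h := tendsto_measure_iUnion_atBot (μ := ν) (s := fun s ↦ {u | s < f u})
    (fun _ _ h _ hu ↦ lt_of_le_of_lt h hu)
  have huniv : (⋃ s : ℝ, {u | s < f u}) = univ :=
    eq_univ_of_forall fun u ↦ mem_iUnion.2 ⟨f u - 1, sub_one_lt (f u)⟩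
  rwa [huniv, restrict_Ioo_zero_one_univ] at h

lemma exists_distFun_le (hf : AEMeasurable f ν) (ht : 0 < t) :
    {s | distFun f s ≤ ENNReal.ofReal t}.Nonempty :=
  ((tendsto_distFun_atTop hf).eventually
    (gt_mem_nhds (ENNReal.ofReal_pos.2 ht))).exists.imp fun _ ↦ le_of_lt

lemma bddBelow_distFun_le (f : ℝ → ℝ) (ht : t < 1) :
    BddBelow {s | distFun f s ≤ ENNReal.ofReal t} := by
  obtain ⟨s₀, hs₀⟩ := ((tendsto_distFun_atBot f).eventually
    (lt_mem_nhds (ENNReal.ofReal_lt_one.2 ht))).exists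
  exact ⟨s₀, fun s hs ↦ le_of_not_gt fun hlt ↦ (hs₀.trans_le (distFun_antitone f hlt.le)).not_ge hs⟩

lemma distFun_le_of_forall_gt (h : ∀ s' > s, distFun f s' ≤ ENNReal.ofReal t) :
    distFun f s ≤ ENNReal.ofReal t := by
  have hunion : {u | s < f u} = ⋃ n : ℕ, {u | s + 1 / (n + 1) < f u} := by
    ext u
    simp only [mem_ofPred_eq, mem_iUnion]
    refine ⟨fun hu ↦ ?_, fun ⟨n, hn⟩ ↦ lt_of_le_of_lt (le_add_of_nonneg_right (by positivity)) hn⟩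
    obtain ⟨n, hn⟩ := exists_nat_one_div_lt (sub_pos.2 hu)
    exact ⟨n, by linarith⟩
  have hmono : Monotone fun n : ℕ ↦ {u | s + 1 / (n + 1) < f u} := fun m n hmn u hu ↦
    lt_of_le_of_lt (add_le_add_right (Nat.one_div_le_one_div hmn) s) hu
  rw [distFun, hunion, hmono.measure_iUnion]
  exact iSup_le fun n ↦ h _ (lt_add_of_pos_right s (by positivity))

lemma rr_le_iff (hf : AEMeasurable f ν) (ht : t ∈ Ioo (0:ℝ) 1) :
    rr f t ≤ s ↔ distFun f s ≤ ENNReal.ofReal t := by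
  rw [rr_eq_sInf_distFun]
  refine ⟨fun h ↦ distFun_le_of_forall_gt fun s' hs' ↦ ?_, csInf_le (bddBelow_distFun_le f ht.2)⟩
  obtain ⟨a, ha, has'⟩ := exists_lt_of_csInf_lt (exists_distFun_le hf ht.1) (h.trans_lt hs')
  exact (distFun_antitone f has'.le).trans ha

lemma lt_rr_iff (hf : AEMeasurable f ν) (ht : t ∈ Ioo (0:ℝ) 1) :
    s < rr f t ↔ t < (distFun f s).toReal := by
  rw [← not_le, rr_le_iff hf ht, not_le,
    ENNReal.ofReal_lt_iff_lt_toReal ht.1.le (distFun_ne_top f s)]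

lemma rr_antitoneOn (hf : AEMeasurable f ν) : AntitoneOn (rr f) (Ioo 0 1) := fun _ ht _ ht' h ↦
  (rr_le_iff hf ht').2 (((rr_le_iff hf ht).1 le_rfl).trans (ENNReal.ofReal_le_ofReal h))

lemma aemeasurable_rr (hf : AEMeasurable f ν) : AEMeasurable (rr f) ν :=
  aemeasurable_restrict_of_antitoneOn measurableSet_Ioo (rr_antitoneOn hf)

lemma distFun_rr (hf : AEMeasurable f ν) : distFun (rr f) = distFun f := by
  funext s
  have hle : (distFun f s).toReal ≤ 1 := ENNReal.toReal_le_of_le_ofReal zero_le_one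
    (by simpa using distFun_le_one f s)
  have hsuper : {τ | s < rr f τ} ∩ Ioo 0 1 = Ioo 0 (distFun f s).toReal := by
    ext τ
    simp only [mem_inter_iff, mem_ofPred_eq, mem_Ioo]
    constructor
    · rintro ⟨h, hτ⟩
      exact ⟨hτ.1, (lt_rr_iff hf hτ).1 h⟩
    · rintro ⟨hτ0, hτ⟩
      have hτ' : τ ∈ Ioo (0:ℝ) 1 := ⟨hτ0, hτ.trans_le hle⟩
      exact ⟨(lt_rr_iff hf hτ').2 hτ, hτ'⟩
  rw [distFun, Measure.restrict_apply' measurableSet_Ioo, hsuper, Real.volume_Ioo, sub_zero,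
    ENNReal.ofReal_toReal (distFun_ne_top f s)]

lemma map_rr (hf : AEMeasurable f ν) : Measure.map (rr f) ν = Measure.map f ν := by
  have hcompl (g : ℝ → ℝ) (hg : AEMeasurable g ν) (a : ℝ) :
      Measure.map g ν (Iic a) = 1 - distFun g a := by
    have hIic : g ⁻¹' Iic a = (g ⁻¹' Ioi a)ᶜ := by ext; simp
    rw [Measure.map_apply₀ hg measurableSet_Iic.nullMeasurableSet, hIic,
      measure_compl₀ (hg.nullMeasurable measurableSet_Ioi) (measure_ne_top _ _),
      restrict_Ioo_zero_one_univ]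
    rfl
  refine Measure.ext_of_Iic _ _ fun a ↦ ?_
  rw [hcompl _ (aemeasurable_rr hf), hcompl _ hf, distFun_rr hf]

lemma integrable_rr (hf : Integrable f ν) : Integrable (rr f) ν := by
  have hfm := hf.aemeasurable
  have hid : Integrable id (Measure.map f ν) :=
    (integrable_map_measure aestronglyMeasurable_id hfm).2 hf
  rw [← map_rr hfm] at hid
  exact (integrable_map_measure aestronglyMeasurable_id (aemeasurable_rr hfm)).1 hid

lemma integral_comp_rr (hf : AEMeasurable f ν) {G : ℝ → ℝ} (hG : Continuous G) :
    ∫ τ, G (rr f τ) ∂ν = ∫ u, G (f u) ∂ν := by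
  rw [← integral_map (aemeasurable_rr hf) hG.aestronglyMeasurable,
    ← integral_map hf hG.aestronglyMeasurable, map_rr hf]

lemma rr_orderIso_comp (hf : AEMeasurable f ν) (φ : ℝ ≃o ℝ) (ht : t ∈ Ioo (0:ℝ) 1) :
    rr (fun u ↦ φ (f u)) t = φ (rr f t) := by
  have hset : {s | distFun (fun u ↦ φ (f u)) s ≤ ENNReal.ofReal t}
      = φ '' {s | distFun f s ≤ ENNReal.ofReal t} := by
    rw [φ.image_eq_preimage_symm]
    ext s
    simp only [distFun, mem_ofPred_eq, mem_preimage, ← φ.symm_apply_lt]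
  rw [rr_eq_sInf_distFun, rr_eq_sInf_distFun, hset,
    ← φ.map_csInf' (exists_distFun_le hf ht.1) (bddBelow_distFun_le f ht.2)]

section Perturbation

variable {g : ℝ → ℝ} {K : ℝ≥0} {C ε : ℝ}

lemma strictMono_add_mul_of_lipschitzWith (hg : LipschitzWith K g) (hε : |ε| * K < 1) :
    StrictMono fun v ↦ v + ε * g v := by
  intro a b hab
  have hlip : |g b - g a| ≤ K * (b - a) := by
    simpa [Real.dist_eq, abs_of_pos (sub_pos.2 hab)] using hg.dist_le_mul b a
  have : |ε * (g b - g a)| ≤ |ε| * K * (b - a) := by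
    rw [abs_mul, mul_assoc]
    exact mul_le_mul_of_nonneg_left hlip (abs_nonneg ε)
  nlinarith [neg_abs_le (ε * (g b - g a)), sub_pos.2 hab]

lemma exists_orderIso_add_mul (hg : LipschitzWith K g) (hgC : ∀ v, |g v| ≤ C)
    (hε : |ε| * K < 1) : ∃ φ : ℝ ≃o ℝ, ∀ v, φ v = v + ε * g v := by
  have hbound (v : ℝ) : |ε * g v| ≤ |ε| * C := by
    rw [abs_mul]; exact mul_le_mul_of_nonneg_left (hgC v) (abs_nonneg ε)
  have hsurj : Function.Surjective fun v ↦ v + ε * g v :=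
    (continuous_id.add (continuous_const.mul hg.continuous)).surjective
      (tendsto_atTop_add_right_of_le _ (-(|ε| * C)) tendsto_id fun v ↦ (abs_le.1 (hbound v)).1)
      (tendsto_atBot_add_right_of_ge _ (|ε| * C) tendsto_id fun v ↦ (abs_le.1 (hbound v)).2)
  exact ⟨(strictMono_add_mul_of_lipschitzWith hg hε).orderIsoOfSurjective _ hsurj, fun _ ↦ rfl⟩

lemma rr_add_mul_comp (hf : AEMeasurable f ν) (hg : LipschitzWith K g) (hgC : ∀ v, |g v| ≤ C)
    (hε : |ε| * K < 1) (ht : t ∈ Ioo (0:ℝ) 1) :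
    rr (fun u ↦ f u + ε * g (f u)) t = rr f t + ε * g (rr f t) := by
  obtain ⟨φ, hφ⟩ := exists_orderIso_add_mul hg hgC hε
  simp only [← hφ]
  exact rr_orderIso_comp hf φ ht

lemma setIntegral_rr_add_mul_comp (hf : Integrable f ν) (hg : LipschitzWith K g)
    (hgC : ∀ v, |g v| ≤ C) (hε : |ε| * K < 1) (hs : s ≤ 1) :
    ∫ τ in Ioo 0 s, rr (fun u ↦ f u + ε * g (f u)) τ
      = (∫ τ in Ioo 0 s, rr f τ) + ε * ∫ τ in Ioo 0 s, g (rr f τ) := by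
  have hsub : Ioo 0 s ⊆ Ioo (0:ℝ) 1 := Ioo_subset_Ioo_right hs
  have hrr : IntegrableOn (rr f) (Ioo 0 s) := IntegrableOn.mono_set (integrable_rr hf) hsub
  have hgrr : IntegrableOn (fun τ ↦ g (rr f τ)) (Ioo 0 s) :=
    IntegrableOn.mono_set
      (integrable_comp_of_abs_le (aemeasurable_rr hf.aemeasurable) hg.continuous hgC) hsub
  rw [← integral_const_mul, ← integral_add hrr (hgrr.const_mul ε)]
  exact setIntegral_congr_fun measurableSet_Ioo fun τ hτ ↦
    rr_add_mul_comp hf.aemeasurable hg hgC hε (hsub hτ)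

end Perturbation

lemma continuousOn_setIntegral_Ioo_zero {F : ℝ → ℝ} (hF : IntegrableOn F (Ioo 0 1)) :
    ContinuousOn (fun s ↦ ∫ τ in Ioo 0 s, F τ) (Icc 0 1) := by
  have hF' : IntegrableOn F (uIcc 0 1) := by
    rwa [uIcc_of_le zero_le_one, integrableOn_Icc_iff_integrableOn_Ioo]
  have h := intervalIntegral.continuousOn_primitive_interval (μ := volume) hF'
  rw [uIcc_of_le zero_le_one] at h
  exact h.congr fun s hs ↦
    ((intervalIntegral.integral_of_le hs.1).trans integral_Ioc_eq_integral_Ioo).symm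

lemma exists_pos_le_of_continuousOn {F : ℝ → ℝ} {a b : ℝ} (hab : a ≤ b)
    (hF : ContinuousOn F (Icc a b)) (hpos : ∀ s ∈ Icc a b, 0 < F s) :
    ∃ η > 0, ∀ s ∈ Icc a b, η ≤ F s :=
  let ⟨s₀, hs₀, hmin⟩ := isCompact_Icc.exists_isMinOn (nonempty_Icc.2 hab) hF
  ⟨F s₀, hpos s₀ hs₀, fun _ hs ↦ hmin hs⟩

section Majorisation

variable {x y g : ℝ → ℝ} {K : ℝ≥0} {C ε : ℝ}

lemma add_mul_comp_mem_Omega (hx : x ∈ Omega y) (hg : LipschitzWith K g)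
    (hgC : ∀ v, |g v| ≤ C) (hε : |ε| * K < 1)
    (hdefect : ∀ s ∈ Ico (0:ℝ) 1, ε * ∫ τ in Ioo 0 s, g (rr x τ)
      ≤ (∫ τ in Ioo 0 s, rr y τ) - ∫ τ in Ioo 0 s, rr x τ)
    (hmean : ∫ τ in Ioo (0:ℝ) 1, g (rr x τ) = 0) :
    (fun u ↦ x u + ε * g (x u)) ∈ Omega y := by
  obtain ⟨hxi, -, htot⟩ := hx
  refine ⟨hxi.add ((integrable_comp_of_abs_le hxi.aemeasurable hg.continuous hgC).const_mul ε),
    fun s hs ↦ ?_, ?_⟩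
  · rw [setIntegral_rr_add_mul_comp hxi hg hgC hε hs.2.le]
    linarith [hdefect s hs]
  · rw [setIntegral_rr_add_mul_comp hxi hg hgC hε le_rfl, hmean, mul_zero, add_zero, htot]

lemma exists_pos_add_mul_comp_mem_Omega (hy : IntegrableOn y (Ioo 0 1)) (hx : x ∈ Omega y)
    (hg : LipschitzWith K g) (hgC : ∀ v, |g v| ≤ C) (hmean : ∫ u, g (x u) ∂ν = 0)
    {a b : ℝ} (ha : 0 ≤ a) (hab : a ≤ b) (hb : b ≤ 1)
    (hlo : ∀ τ ∈ Ioo 0 a, g (rr x τ) = 0) (hhi : ∀ τ ∈ Ico b 1, g (rr x τ) = 0)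
    (hstrict : ∀ s ∈ Icc a b, ∫ τ in Ioo 0 s, rr x τ < ∫ τ in Ioo 0 s, rr y τ) :
    ∃ δ > 0, ∀ ε, |ε| = δ → (fun u ↦ x u + ε * g (x u)) ∈ Omega y := by
  have hxi : Integrable x ν := hx.1
  set H : ℝ → ℝ := fun s ↦ ∫ τ in Ioo 0 s, g (rr x τ)
  have hH1 : H 1 = 0 := (integral_comp_rr hxi.aemeasurable hg.continuous).trans hmean
  have hH_lo (s : ℝ) (hs : s ≤ a) : H s = 0 :=
    setIntegral_eq_zero_of_forall_eq_zero fun τ hτ ↦ hlo τ ⟨hτ.1, hτ.2.trans_le hs⟩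
  have hH_hi (s : ℝ) (hs : s ∈ Icc b 1) : H s = 0 := by
    rw [← hH1]
    refine (setIntegral_eq_of_subset_of_forall_sdiff_eq_zero measurableSet_Ioo
      (Ioo_subset_Ioo_right hs.2) fun τ hτ ↦ hhi τ ⟨?_, hτ.1.2⟩).symm
    exact hs.1.trans (not_lt.1 fun h ↦ hτ.2 ⟨hτ.1.1, h⟩)
  have hH_le (s : ℝ) (hs : s ∈ Icc (0:ℝ) 1) : |H s| ≤ C := by
    have hC : 0 ≤ C := (abs_nonneg _).trans (hgC 0)
    rw [← Real.norm_eq_abs]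
    calc ‖H s‖ ≤ C * volume.real (Ioo 0 s) :=
          norm_setIntegral_le_of_norm_le_const measure_Ioo_lt_top fun τ _ ↦ hgC _
      _ ≤ C := by rw [Real.volume_real_Ioo_of_le hs.1, sub_zero]; nlinarith [hs.2]
  obtain ⟨η, hη, hηgap⟩ := exists_pos_le_of_continuousOn hab
    (((continuousOn_setIntegral_Ioo_zero (integrable_rr hy)).sub
      (continuousOn_setIntegral_Ioo_zero (integrable_rr hxi))).mono (Icc_subset_Icc ha hb))
    fun s hs ↦ sub_pos.2 (hstrict s hs)
  obtain ⟨δ, hδ, hδK, hδC⟩ : ∃ δ : ℝ, 0 < δ ∧ δ * K < 1 ∧ δ * C < η := by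
    have hK : ∀ᶠ δ : ℝ in 𝓝 0, δ * K < 1 :=
      ContinuousAt.eventually_lt (by fun_prop) continuousAt_const (by simp)
    have hC : ∀ᶠ δ : ℝ in 𝓝 0, δ * C < η :=
      ContinuousAt.eventually_lt (by fun_prop) continuousAt_const (by simpa using hη)
    exact (hK.and hC).exists_gt
  refine ⟨δ, hδ, fun ε hε ↦ add_mul_comp_mem_Omega hx hg hgC (hε ▸ hδK) (fun s hs ↦ ?_) hH1⟩
  show ε * H s ≤ _
  have hgap : 0 ≤ (∫ τ in Ioo 0 s, rr y τ) - ∫ τ in Ioo 0 s, rr x τ := sub_nonneg.2 (hx.2.1 s hs)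
  by_cases hsab : s ∈ Icc a b
  · calc ε * H s ≤ |ε| * |H s| := (le_abs_self _).trans (abs_mul _ _).le
      _ ≤ δ * C := by
        rw [hε]; exact mul_le_mul_of_nonneg_left (hH_le s (Ico_subset_Icc_self hs)) hδ.le
      _ ≤ _ := hδC.le.trans (hηgap s hsab)
  · rcases not_and_or.1 hsab with hs' | hs'
    · rw [hH_lo s (le_of_not_ge hs'), mul_zero]; exact hgap
    · rw [hH_hi s ⟨le_of_not_ge hs', hs.2.le⟩, mul_zero]; exact hgap

theorem ae_comp_eq_zero_of_extremePt (hy : IntegrableOn y (Ioo 0 1))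
    (hx : ExtremePt (Omega y) x) (hg : LipschitzWith K g) (hgC : ∀ v, |g v| ≤ C)
    (hmean : ∫ u, g (x u) ∂ν = 0) {a b : ℝ} (ha : 0 ≤ a) (hab : a ≤ b) (hb : b ≤ 1)
    (hlo : ∀ τ ∈ Ioo 0 a, g (rr x τ) = 0) (hhi : ∀ τ ∈ Ico b 1, g (rr x τ) = 0)
    (hstrict : ∀ s ∈ Icc a b, ∫ τ in Ioo 0 s, rr x τ < ∫ τ in Ioo 0 s, rr y τ) :
    ∀ᵐ u ∂ν, g (x u) = 0 := by
  obtain ⟨δ, hδ, hmem⟩ :=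
    exists_pos_add_mul_comp_mem_Omega hy hx.1 hg hgC hmean ha hab hb hlo hhi hstrict
  have hneg : (fun u ↦ x u - δ * g (x u)) ∈ Omega y := by
    simpa [neg_mul, ← sub_eq_add_neg] using hmem (-δ) (by simp [abs_of_pos hδ])
  filter_upwards [hx.ae_eq_zero_of_add_mem_of_sub_mem (hmem δ (abs_of_pos hδ)) hneg] with u hu
  exact (mul_eq_zero.1 hu).resolve_left hδ.ne'

end Majorisation

noncomputable def tent (p q v : ℝ) : ℝ := max (min (v - p) (q - v)) 0

section Tent

variable {p q v : ℝ}

lemma tent_nonneg (p q v : ℝ) : 0 ≤ tent p q v := le_max_right _ _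

lemma tent_eq_zero_of_le_left (h : v ≤ p) : tent p q v = 0 :=
  max_eq_right ((min_le_left _ _).trans (sub_nonpos.2 h))

lemma tent_eq_zero_of_le_right (h : q ≤ v) : tent p q v = 0 :=
  max_eq_right ((min_le_right _ _).trans (sub_nonpos.2 h))

lemma tent_pos (h : v ∈ Ioo p q) : 0 < tent p q v :=
  lt_max_of_lt_left (lt_min (sub_pos.2 h.1) (sub_pos.2 h.2))

lemma abs_tent_le (p q v : ℝ) : |tent p q v| ≤ |q - p| := by
  rw [abs_of_nonneg (tent_nonneg p q v)]
  refine max_le ?_ (abs_nonneg _)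
  linarith [min_le_left (v - p) (q - v), min_le_right (v - p) (q - v), le_abs_self (q - p),
    abs_nonneg (q - p)]

lemma lipschitzWith_tent (p q : ℝ) : LipschitzWith 1 (tent p q) := by
  have h := ((LipschitzWith.id.sub (LipschitzWith.const p)).min
    ((LipschitzWith.const q).sub LipschitzWith.id)).max_const 0
  simp only [add_zero, zero_add, max_self] at h
  exact h

end Tent

lemma integral_tent_comp_pos (hf : AEMeasurable f ν) {b p q : ℝ} (hb : b ∈ Ioo (0:ℝ) 1)
    (hpq : rr f b ∈ Ioo p q) : 0 < ∫ u, tent p q (f u) ∂ν := by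
  have htent := (lipschitzWith_tent p q).continuous
  rw [← integral_comp_rr hf htent, integral_pos_iff_support_of_nonneg (fun _ ↦ tent_nonneg _ _ _)
    (integrable_comp_of_abs_le (aemeasurable_rr hf) htent (abs_tent_le p q))]
  set d := min (distFun f p).toReal 1
  have hbd : b < d := lt_min ((lt_rr_iff hf hb).1 hpq.1) hb.2
  have hsupport : Ioo b d ⊆ Function.support fun τ ↦ tent p q (rr f τ) := fun τ hτ ↦ by
    have hτ1 : τ ∈ Ioo (0:ℝ) 1 := ⟨hb.1.trans hτ.1, hτ.2.trans_le (min_le_right _ _)⟩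
    refine (tent_pos ⟨(lt_rr_iff hf hτ1).2 (hτ.2.trans_le (min_le_left _ _)), ?_⟩).ne'
    exact (rr_antitoneOn hf hb hτ1 hτ.1.le).trans_lt hpq.2
  refine lt_of_lt_of_le ?_ (measure_mono hsupport)
  rw [Measure.restrict_apply measurableSet_Ioo,
    inter_eq_left.2 (Ioo_subset_Ioo hb.1.le (min_le_right _ _)), Real.volume_Ioo]
  exact ENNReal.ofReal_pos.2 (sub_pos.2 hbd)

lemma exists_mem_Ioo_rr_lt (hf : AEMeasurable f ν) {a : ℝ} (ht : 0 < t) (hta : t < a)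
    (ha : a < 1) (h : rr f a < rr f t) : ∃ a' ∈ Ioo t a, rr f a < rr f a' := by
  set d := (distFun f (rr f a)).toReal
  have htd : t < d := (lt_rr_iff hf ⟨ht, hta.trans ha⟩).1 h
  have hda : d ≤ a := not_lt.1 fun had ↦ lt_irrefl _ ((lt_rr_iff hf ⟨ht.trans hta, ha⟩).2 had)
  exact ⟨(t + d) / 2, ⟨by linarith, by linarith⟩,
    (lt_rr_iff hf ⟨by linarith, by linarith⟩).2 (by linarith)⟩

lemma rr_lt_of_forall_exists_ne (hf : AEMeasurable f ν) (ht : 0 < t)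
    (hne : ∀ ε > 0, ∃ u ∈ Ico t (t + ε), rr f u ≠ rr f t) {a : ℝ} (ha : a ∈ Ioo t 1) :
    rr f a < rr f t := by
  have htI : t ∈ Ioo (0:ℝ) 1 := ⟨ht, ha.1.trans ha.2⟩
  refine (rr_antitoneOn hf htI ⟨ht.trans ha.1, ha.2⟩ ha.1.le).lt_of_ne fun heq ↦ ?_
  obtain ⟨u, hu, hu_ne⟩ := hne (a - t) (sub_pos.2 ha.1)
  have huI : u ∈ Ioo (0:ℝ) 1 := ⟨ht.trans_le hu.1, (by linarith [hu.2] : u < a).trans ha.2⟩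
  refine hu_ne (le_antisymm (rr_antitoneOn hf htI huI hu.1) ?_)
  rw [← heq]
  exact rr_antitoneOn hf huI ⟨ht.trans ha.1, ha.2⟩ (by linarith [hu.2])

section Extreme

variable {x y : ℝ → ℝ}

lemma integral_tent_comp_eq_zero_of_extremePt (hy : IntegrableOn y (Ioo 0 1))
    (hx : ExtremePt (Omega y) x) {p m q a b : ℝ} (hpm : p ≤ m) (hmq : m ≤ q)
    (ha : 0 ≤ a) (hab : a ≤ b) (hb : b ≤ 1)
    (hlo : ∀ τ ∈ Ioo 0 a, q ≤ rr x τ) (hhi : ∀ τ ∈ Ico b 1, rr x τ ≤ p)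
    (hstrict : ∀ s ∈ Icc a b, ∫ τ in Ioo 0 s, rr x τ < ∫ τ in Ioo 0 s, rr y τ)
    (hN : 0 < ∫ u, tent p m (x u) ∂ν) :
    ∫ u, tent m q (x u) ∂ν = 0 := by
  have hxm : AEMeasurable x ν := hx.1.1.aemeasurable
  set N := ∫ u, tent p m (x u) ∂ν
  set P := ∫ u, tent m q (x u) ∂ν
  set g : ℝ → ℝ := fun w ↦ N * tent m q w - P * tent p m w with hg
  have hlip : LipschitzWith (‖N‖₊ * 1 + ‖P‖₊ * 1) g :=
    ((lipschitzWith_smul N).comp (lipschitzWith_tent m q)).sub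
      ((lipschitzWith_smul P).comp (lipschitzWith_tent p m))
  have hbound (w : ℝ) : |g w| ≤ |N| * |q - m| + |P| * |m - p| := by
    refine (abs_sub _ _).trans (add_le_add ?_ ?_) <;> rw [abs_mul] <;>
      exact mul_le_mul_of_nonneg_left (abs_tent_le _ _ _) (abs_nonneg _)
  have hint (p' q' : ℝ) : Integrable (fun u ↦ tent p' q' (x u)) ν :=
    integrable_comp_of_abs_le hxm (lipschitzWith_tent p' q').continuous (abs_tent_le p' q')
  have hmean : ∫ u, g (x u) ∂ν = 0 := by
    simp only [hg]
    rw [integral_sub ((hint m q).const_mul N) ((hint p m).const_mul P), integral_const_mul,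
      integral_const_mul, mul_comm, sub_self]
  have hvanish : ∀ᵐ u ∂ν, g (x u) = 0 :=
    ae_comp_eq_zero_of_extremePt hy hx hlip hbound hmean ha hab hb
      (fun τ hτ ↦ by simp [hg, tent_eq_zero_of_le_right (hlo τ hτ),
        tent_eq_zero_of_le_right (hmq.trans (hlo τ hτ))])
      (fun τ hτ ↦ by simp [hg, tent_eq_zero_of_le_left (hhi τ hτ),
        tent_eq_zero_of_le_left ((hhi τ hτ).trans hpm)])
      hstrict
  refine integral_eq_zero_of_ae ?_
  filter_upwards [hvanish] with u hu
  rcases le_or_gt (x u) m with hxu | hxu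
  · exact tent_eq_zero_of_le_left hxu
  · simpa [hg, tent_eq_zero_of_le_right hxu.le, hN.ne'] using hu

theorem exists_Ico_rr_eq_of_extremePt (hy : IntegrableOn y (Ioo 0 1))
    (hx : ExtremePt (Omega y) x) {t c : ℝ} (ht : 0 < t) (htc : t < c) (hc : c < 1)
    (hstrict : ∀ s ∈ Ioc t c, ∫ τ in Ioo 0 s, rr x τ < ∫ τ in Ioo 0 s, rr y τ) :
    ∃ ε > 0, ∀ u ∈ Ico t (t + ε), rr x u = rr x t := by
  by_contra! hne
  have hxm : AEMeasurable x ν := hx.1.1.aemeasurable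
  have hdrop (a : ℝ) (ha : a ∈ Ioc t c) : ∃ a' ∈ Ioo t a, rr x a < rr x a' :=
    exists_mem_Ioo_rr_lt hxm ht ha.1 (ha.2.trans_lt hc)
      (rr_lt_of_forall_exists_ne hxm ht hne ⟨ha.1, ha.2.trans_lt hc⟩)
  obtain ⟨a₁, ha₁, h₀₁⟩ := hdrop c ⟨htc, le_rfl⟩
  obtain ⟨a₂, ha₂, h₁₂⟩ := hdrop a₁ ⟨ha₁.1, ha₁.2.le⟩
  obtain ⟨a₃, ha₃, h₂₃⟩ := hdrop a₂ ⟨ha₂.1, ha₂.2.le.trans ha₁.2.le⟩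
  have hI (a : ℝ) (ha : a ∈ Icc a₃ c) : a ∈ Ioo (0:ℝ) 1 :=
    ⟨ht.trans (ha₃.1.trans_le ha.1), ha.2.trans_lt hc⟩
  have hmem₁ : a₁ ∈ Icc a₃ c := ⟨(ha₃.2.trans ha₂.2).le, ha₁.2.le⟩
  have hmem₂ : a₂ ∈ Icc a₃ c := ⟨ha₃.2.le, ha₂.2.le.trans ha₁.2.le⟩
  have hac : a₃ ≤ c := hmem₁.1.trans hmem₁.2
  have ha₃I := hI a₃ ⟨le_rfl, hac⟩
  have hcI := hI c ⟨hac, le_rfl⟩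
  obtain ⟨m, hm₁, hm₂⟩ := exists_between h₁₂
  have hzero := integral_tent_comp_eq_zero_of_extremePt hy hx (p := rr x c) (m := m) (q := rr x a₃)
    (h₀₁.trans hm₁).le (hm₂.trans h₂₃).le ha₃I.1.le hac hc.le
    (fun τ hτ ↦ rr_antitoneOn hxm ⟨hτ.1, hτ.2.trans ha₃I.2⟩ ha₃I hτ.2.le)
    (fun τ hτ ↦ rr_antitoneOn hxm hcI ⟨hcI.1.trans_le hτ.1, hτ.2⟩ hτ.1)
    (fun s hs ↦ hstrict s ⟨ha₃.1.trans_le hs.1, hs.2⟩)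
    (integral_tent_comp_pos hxm (hI a₁ hmem₁) ⟨h₀₁, hm₁⟩)
  exact (integral_tent_comp_pos hxm (hI a₂ hmem₂) ⟨hm₂, h₂₃⟩).ne' hzero

end Extreme

end Rearrangement

theorem Set.countable_image_of_forall_exists_Ico_eq {α : Type*} {f : ℝ → α} {S : Set ℝ}
    (h : ∀ t ∈ S, ∃ ε > 0, ∀ u ∈ Ico t (t + ε), f u = f t) : (f '' S).Countable := by
  refine (countable_range fun q : ℚ ↦ f q).mono ?_
  rintro _ ⟨t, ht, rfl⟩
  obtain ⟨ε, hε, hconst⟩ := h t ht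
  obtain ⟨q, htq, hqε⟩ := exists_rat_btwn (lt_add_of_pos_right t hε)
  exact ⟨q, hconst q ⟨htq.le, hqε⟩⟩

open Rearrangement in
theorem rr_step_on_strict_interval_general (y x : ℝ → ℝ)
    (hy : IntegrableOn y (Ioo (0:ℝ) 1))
    (hx : ExtremePt (Omega y) x)
    (t₁ t₂ : ℝ) (ht₁ : (0:ℝ) ≤ t₁) (ht₂ : t₂ ≤ 1)
    (hstrict : ∀ s ∈ Ioo t₁ t₂,
      (∫ t in Ioo (0:ℝ) s, rr x t) < ∫ t in Ioo (0:ℝ) s, rr y t) :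
    (∀ t ∈ Ioo t₁ t₂, ∃ ε > (0:ℝ), ∀ u ∈ Ico t (t + ε), rr x u = rr x t) ∧
      (rr x '' Ioo t₁ t₂).Countable := by
  have hright : ∀ t ∈ Ioo t₁ t₂, ∃ ε > (0:ℝ), ∀ u ∈ Ico t (t + ε), rr x u = rr x t :=
    fun t ht ↦ exists_Ico_rr_eq_of_extremePt hy hx (ht₁.trans_lt ht.1)
      (by linarith [ht.2] : t < (t + t₂) / 2) (by linarith [ht.2])
      fun s hs ↦ hstrict s ⟨ht.1.trans hs.1, hs.2.trans_lt (by linarith [ht.2])⟩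
  exact ⟨hright, countable_image_of_forall_exists_Ico_eq hright⟩

theorem rr_step_on_strict_interval (y x : ℝ → ℝ)
    (hy : IntegrableOn y (Ioo (0:ℝ) 1))
    (hx : ExtremePt (Omega y) x)
    (t₁ t₂ : ℝ) (ht : t₁ < t₂) (ht₁ : (0:ℝ) ≤ t₁) (ht₂ : t₂ ≤ 1)
    (hstrict : ∀ s ∈ Ioo t₁ t₂,
      (∫ t in Ioo (0:ℝ) s, rr x t) < ∫ t in Ioo (0:ℝ) s, rr y t) :
    (∀ t ∈ Ioo t₁ t₂, ∃ ε > (0:ℝ), ∀ u ∈ Ico t (t + ε), rr x u = rr x t) ∧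
      (rr x '' Ioo t₁ t₂).Countable :=
  rr_step_on_strict_interval_general y x hy hx t₁ t₂ ht₁ ht₂ hstrict
end
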